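/- arXiv:2509.15088 — 9 statements merged into one kernel-verified Lean document; each statement's English description precedes it below -/
import Mathlib

section
/- Let R₁, …, R_m ∈ ℝ^k with weights w₁, …, w_m > 0 summing to 1, let R'₁, …, R'_{m'} ∈ ℝ^k with weights w'₁, …, w'_{m'} > 0 summing to 1, and let q ∈ [1,∞]. Then every admissible flow (f_{ij}) satisfies Σ_{i,j} f_{ij}·‖Rᵢ − R'_j‖_q ≥ ‖Σᵢ wᵢRᵢ − Σⱼ w'_jR'_j‖_q; consequently the EMD between these two weighted distributions with ground distance the ℓ_q distance on ℝ^k is at least ‖Σᵢ wᵢRᵢ − Σⱼ w'_jR'_j‖_q. -/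
open scoped ENNReal

/-- The `ℓ_q` norm of a vector in `ℝ^k`, for `q ∈ [1,∞]`:
`‖x‖_q = (Σⱼ |xⱼ|^q)^(1/q)` for finite `q`, and `‖x‖_∞ = maxⱼ |xⱼ|`. -/
noncomputable def lqnorm (q : ℝ≥0∞) {k : ℕ} (x : Fin k → ℝ) : ℝ :=
  if q = ⊤ then ⨆ j, |x j| else (∑ j, |x j| ^ q.toReal) ^ (1 / q.toReal)

/-- The Earth Mover's Distance between the weighted distribution `(Rᵢ, wᵢ)` and
the weighted distribution `(R'ⱼ, w'ⱼ)` with ground distance `D`: the infimum of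
`Σ_{i,j} f_{ij} D(Rᵢ, R'ⱼ)` over admissible flows `(f_{ij})`. -/
noncomputable def EMD {X Y : Type*} {m m' : ℕ} (D : X → Y → ℝ)
    (R : Fin m → X) (w : Fin m → ℝ) (R' : Fin m' → Y) (w' : Fin m' → ℝ) : ℝ :=
  sInf {c : ℝ | ∃ f : Fin m → Fin m' → ℝ,
    (∀ i j, 0 ≤ f i j ∧ f i j ≤ 1) ∧
    (∀ j, ∑ i, f i j ≤ w' j) ∧
    (∀ i, ∑ j, f i j ≤ w i) ∧
    (∑ i, ∑ j, f i j) = 1 ∧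
    c = ∑ i, ∑ j, f i j * D (R i) (R' j)}

/-!
Since an admissible flow carries total mass one and its row and column sums are bounded by weights
that also total one, its marginals are exactly `w` and `w'`. Hence
`Σᵢ wᵢRᵢ − Σⱼ w'ⱼR'ⱼ = Σᵢⱼ fᵢⱼ (Rᵢ − R'ⱼ)`, and the triangle inequality for the `ℓ_q` norm bounds
its norm by the cost `Σᵢⱼ fᵢⱼ ‖Rᵢ − R'ⱼ‖_q` of the flow. The product flow `wᵢ w'ⱼ` is admissible,
so the infimum defining the EMD is over a nonempty set and inherits the bound.
-/

open Finset

section Flow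

variable {ι κ : Type*} [Fintype ι] [Fintype κ]

def IsAdmissibleFlow (w : ι → ℝ) (w' : κ → ℝ) (f : ι → κ → ℝ) : Prop :=
  (∀ i j, 0 ≤ f i j ∧ f i j ≤ 1) ∧ (∀ j, ∑ i, f i j ≤ w' j) ∧ (∀ i, ∑ j, f i j ≤ w i) ∧
    ∑ i, ∑ j, f i j = 1

namespace IsAdmissibleFlow

variable {w : ι → ℝ} {w' : κ → ℝ} {f : ι → κ → ℝ}

theorem nonneg (hf : IsAdmissibleFlow w w' f) (i : ι) (j : κ) : 0 ≤ f i j :=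
  (hf.1 i j).1

theorem sum_row_eq (hf : IsAdmissibleFlow w w' f) (hW : ∑ i, w i = 1) (i : ι) :
    ∑ j, f i j = w i :=
  (sum_eq_sum_iff_of_le fun i _ => hf.2.2.1 i).1 (hf.2.2.2.trans hW.symm) i (mem_univ i)

theorem sum_col_eq (hf : IsAdmissibleFlow w w' f) (hW' : ∑ j, w' j = 1) (j : κ) :
    ∑ i, f i j = w' j :=
  (sum_eq_sum_iff_of_le fun j _ => hf.2.1 j).1
    ((sum_comm.trans hf.2.2.2).trans hW'.symm) j (mem_univ j)

end IsAdmissibleFlow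

theorem isAdmissibleFlow_mul {w : ι → ℝ} {w' : κ → ℝ} (hw : ∀ i, 0 ≤ w i) (hW : ∑ i, w i = 1)
    (hw' : ∀ j, 0 ≤ w' j) (hW' : ∑ j, w' j = 1) :
    IsAdmissibleFlow w w' fun i j => w i * w' j := by
  have hw_le : ∀ i, w i ≤ 1 := fun i => hW ▸ single_le_sum (fun i _ => hw i) (mem_univ i)
  have hw'_le : ∀ j, w' j ≤ 1 := fun j => hW' ▸ single_le_sum (fun j _ => hw' j) (mem_univ j)
  refine ⟨fun i j => ⟨mul_nonneg (hw i) (hw' j), mul_le_one₀ (hw_le i) (hw' j) (hw'_le j)⟩,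
    fun j => ?_, fun i => ?_, ?_⟩
  · rw [← sum_mul, hW, one_mul]
  · rw [← mul_sum, hW', mul_one]
  · simp only [← mul_sum, hW', mul_one, hW]

end Flow

section Transport

variable {ι κ R E : Type*} [Fintype ι] [Fintype κ]

theorem sum_smul_sub_sum_smul_eq_of_marginals [Ring R] [AddCommGroup E] [Module R E]
    {w : ι → R} {w' : κ → R} {f : ι → κ → R}
    (hrow : ∀ i, ∑ j, f i j = w i) (hcol : ∀ j, ∑ i, f i j = w' j) (x : ι → E) (y : κ → E) :
    ∑ i, w i • x i - ∑ j, w' j • y j = ∑ i, ∑ j, f i j • (x i - y j) := by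
  simp only [smul_sub, sum_sub_distrib, ← sum_smul, hrow]
  rw [sum_comm (f := fun i j => f i j • y j)]
  simp only [← sum_smul, hcol]

theorem norm_sum_smul_sub_sum_smul_le [SeminormedAddCommGroup E] [NormedSpace ℝ E]
    {w : ι → ℝ} {w' : κ → ℝ} {f : ι → κ → ℝ} (hf : ∀ i j, 0 ≤ f i j)
    (hrow : ∀ i, ∑ j, f i j = w i) (hcol : ∀ j, ∑ i, f i j = w' j) (x : ι → E) (y : κ → E) :
    ‖∑ i, w i • x i - ∑ j, w' j • y j‖ ≤ ∑ i, ∑ j, f i j * ‖x i - y j‖ := by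
  rw [sum_smul_sub_sum_smul_eq_of_marginals hrow hcol]
  calc ‖∑ i, ∑ j, f i j • (x i - y j)‖
      ≤ ∑ i, ∑ j, ‖f i j • (x i - y j)‖ :=
        (norm_sum_le _ _).trans (sum_le_sum fun i _ => norm_sum_le _ _)
    _ = ∑ i, ∑ j, f i j * ‖x i - y j‖ := by
        simp only [norm_smul, Real.norm_of_nonneg (hf _ _)]

end Transport

theorem lqnorm_eq_norm_toLp {q : ℝ≥0∞} (hq : q ≠ 0) {k : ℕ} (x : Fin k → ℝ) :
    lqnorm q x = ‖WithLp.toLp q x‖ := by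
  rcases eq_or_ne q ⊤ with rfl | hq_top
  · simp [lqnorm, PiLp.norm_eq_ciSup, Real.norm_eq_abs]
  · rw [lqnorm, if_neg hq_top, PiLp.norm_eq_sum (ENNReal.toReal_pos hq hq_top)]
    simp [Real.norm_eq_abs]

theorem lqnorm_sum_smul_sub_sum_smul_le {q : ℝ≥0∞} [Fact (1 ≤ q)] {k m m' : ℕ}
    {w : Fin m → ℝ} {w' : Fin m' → ℝ} {f : Fin m → Fin m' → ℝ} (hf : IsAdmissibleFlow w w' f)
    (hW : ∑ i, w i = 1) (hW' : ∑ j, w' j = 1) (R : Fin m → Fin k → ℝ) (R' : Fin m' → Fin k → ℝ) :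
    lqnorm q (∑ i, w i • R i - ∑ j, w' j • R' j) ≤
      ∑ i, ∑ j, f i j * lqnorm q (R i - R' j) := by
  have hq : q ≠ 0 := (zero_lt_one.trans_le Fact.out).ne'
  simpa only [lqnorm_eq_norm_toLp hq, WithLp.toLp_sub, WithLp.toLp_sum, WithLp.toLp_smul] using
    norm_sum_smul_sub_sum_smul_le hf.nonneg (hf.sum_row_eq hW) (hf.sum_col_eq hW')
      (fun i => WithLp.toLp q (R i)) (fun j => WithLp.toLp q (R' j))

theorem le_EMD {X Y : Type*} {m m' : ℕ} {D : X → Y → ℝ} {R : Fin m → X} {w : Fin m → ℝ}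
    {R' : Fin m' → Y} {w' : Fin m' → ℝ} {c : ℝ} (hne : ∃ f, IsAdmissibleFlow w w' f)
    (hc : ∀ f, IsAdmissibleFlow w w' f → c ≤ ∑ i, ∑ j, f i j * D (R i) (R' j)) :
    c ≤ EMD D R w R' w' := by
  obtain ⟨f, hf⟩ := hne
  refine le_csInf ⟨_, f, hf.1, hf.2.1, hf.2.2.1, hf.2.2.2, rfl⟩ ?_
  rintro _ ⟨g, h01, hcol, hrow, htot, rfl⟩
  exact hc g ⟨h01, hcol, hrow, htot⟩

theorem stmt_5_general (k : ℕ) (q : ℝ≥0∞) (hq : 1 ≤ q) (m m' : ℕ)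
    (R : Fin m → Fin k → ℝ) (w : Fin m → ℝ)
    (R' : Fin m' → Fin k → ℝ) (w' : Fin m' → ℝ)
    (hw : ∀ i, 0 < w i) (hW : ∑ i, w i = 1)
    (hw' : ∀ j, 0 < w' j) (hW' : ∑ j, w' j = 1) :
    (∀ f : Fin m → Fin m' → ℝ,
      (∀ i j, 0 ≤ f i j ∧ f i j ≤ 1) →
      (∀ j, ∑ i, f i j ≤ w' j) →
      (∀ i, ∑ j, f i j ≤ w i) →
      (∑ i, ∑ j, f i j) = 1 →
      lqnorm q ((∑ i, w i • R i) - (∑ j, w' j • R' j)) ≤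
        ∑ i, ∑ j, f i j * lqnorm q (fun t => R i t - R' j t)) ∧
    lqnorm q ((∑ i, w i • R i) - (∑ j, w' j • R' j)) ≤
      EMD (fun x y => lqnorm q (fun t => x t - y t)) R w R' w' := by
  have : Fact (1 ≤ q) := ⟨hq⟩
  have cost_ge : ∀ f, IsAdmissibleFlow w w' f →
      lqnorm q ((∑ i, w i • R i) - (∑ j, w' j • R' j)) ≤
        ∑ i, ∑ j, f i j * lqnorm q (fun t => R i t - R' j t) :=
    fun f hf => lqnorm_sum_smul_sub_sum_smul_le hf hW hW' R R'
  refine ⟨fun f h01 hcol hrow htot => cost_ge f ⟨h01, hcol, hrow, htot⟩, le_EMD ?_ cost_ge⟩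
  exact ⟨_, isAdmissibleFlow_mul (fun i => (hw i).le) hW (fun j => (hw' j).le) hW'⟩

/-- Every admissible flow `(f_{ij})` between two weighted
distributions in `ℝ^k` satisfies
`Σ_{i,j} f_{ij}·‖Rᵢ − R'ⱼ‖_q ≥ ‖Σᵢ wᵢRᵢ − Σⱼ w'ⱼR'ⱼ‖_q`; consequently the EMD
with ground distance `ℓ_q` is at least `‖Σᵢ wᵢRᵢ − Σⱼ w'ⱼR'ⱼ‖_q`. -/
theorem stmt_5 (k : ℕ) (q : ℝ≥0∞) (hq : 1 ≤ q) (m m' : ℕ) (hm : 1 ≤ m) (hm' : 1 ≤ m')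
    (R : Fin m → Fin k → ℝ) (w : Fin m → ℝ)
    (R' : Fin m' → Fin k → ℝ) (w' : Fin m' → ℝ)
    (hw : ∀ i, 0 < w i) (hW : ∑ i, w i = 1)
    (hw' : ∀ j, 0 < w' j) (hW' : ∑ j, w' j = 1) :
    (∀ f : Fin m → Fin m' → ℝ,
      (∀ i j, 0 ≤ f i j ∧ f i j ≤ 1) →
      (∀ j, ∑ i, f i j ≤ w' j) →
      (∀ i, ∑ j, f i j ≤ w i) →
      (∑ i, ∑ j, f i j) = 1 →
      lqnorm q ((∑ i, w i • R i) - (∑ j, w' j • R' j)) ≤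
        ∑ i, ∑ j, f i j * lqnorm q (fun t => R i t - R' j t)) ∧
    lqnorm q ((∑ i, w i • R i) - (∑ j, w' j • R' j)) ≤
      EMD (fun x y => lqnorm q (fun t => x t - y t)) R w R' w' :=
  stmt_5_general k q hq m m' R w R' w' hw hW hw' hW'
end

section
/- Let S, Q ⊂ ℝ be finite sets with |S| = |Q| = m ≥ 2. For a point p of such a set, let its row be the increasing list of the m−1 distances |q − p| over the other points q of the set. If the multiset of rows of points of S equals the multiset of rows of points of Q, then there is an isometry of ℝ (a map of the form x ↦ x + t or x ↦ −x + t) taking S onto Q. -/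
/-- The row of a point `p` of a finite set `S ⊂ ℝ`: the increasing list of the
distances `|q − p|` over the other points `q` of `S`. -/
noncomputable def row (S : Finset ℝ) (p : ℝ) : List ℝ :=
  Multiset.sort (((S.erase p).val).map fun q => |q - p|) (· ≤ ·)

/-! A finite set of reals is rebuilt from the distances seen from its least point `a` as
`a + dists`, and from its greatest point `b` as `b - dists`. Every distance is at most the
diameter, and the row of an endpoint contains the diameter; pairing the least points of `S` and
of `Q` with their partners shows that the two diameters agree, so the partner `q` of `min S`
sees the diameter of `Q` and is itself an endpoint of `Q`. Rebuilding `S` from `min S` and `Q`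
from `q` out of the same distances exhibits `Q` as a translate or a reflection of `S`. Only the
set of distances in a row is used, not their multiplicities. -/

namespace Finset

noncomputable def dists (S : Finset ℝ) (p : ℝ) : Finset ℝ :=
  S.image fun x => |x - p|

theorem dists_eq_of_row_eq {S Q : Finset ℝ} {p q : ℝ} (hp : p ∈ S) (hq : q ∈ Q)
    (h : row S p = row Q q) : S.dists p = Q.dists q := by
  have hrow (T : Finset ℝ) (t : ℝ) (ht : t ∈ T) :
      T.dists t = insert 0 ((row T t : Multiset ℝ).toFinset) := by
    rw [row, Multiset.sort_eq, Multiset.toFinset_map, val_toFinset, dists]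
    conv_lhs => rw [← insert_erase ht, image_insert, sub_self, abs_zero]
  rw [hrow S p hp, hrow Q q hq, h]

theorem abs_sub_le_max'_sub_min' {S : Finset ℝ} (hS : S.Nonempty) {x y : ℝ} (hx : x ∈ S)
    (hy : y ∈ S) : |x - y| ≤ S.max' hS - S.min' hS := by
  have := S.min'_le x hx; have := S.le_max' x hx
  have := S.min'_le y hy; have := S.le_max' y hy
  rw [abs_sub_le_iff]
  constructor <;> linarith

theorem eq_min'_or_eq_max'_of_abs_sub_eq {S : Finset ℝ} (hS : S.Nonempty) {x y : ℝ}
    (hx : x ∈ S) (hy : y ∈ S) (h : |x - y| = S.max' hS - S.min' hS) :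
    y = S.min' hS ∨ y = S.max' hS := by
  have := S.min'_le x hx; have := S.le_max' x hx
  have := S.min'_le y hy; have := S.le_max' y hy
  rcases abs_cases (x - y) with ⟨hxy, -⟩ | ⟨hxy, -⟩
  · left; linarith
  · right; linarith

theorem max'_sub_min'_mem_dists_min' {S : Finset ℝ} (hS : S.Nonempty) :
    S.max' hS - S.min' hS ∈ S.dists (S.min' hS) :=
  mem_image.2 ⟨S.max' hS, S.max'_mem hS,
    abs_of_nonneg (sub_nonneg.2 (S.min'_le_max' hS))⟩

theorem eq_image_add_dists_min' {S : Finset ℝ} (hS : S.Nonempty) :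
    S = (S.dists (S.min' hS)).image (S.min' hS + ·) := by
  ext x
  simp only [dists, image_image, Function.comp_def, mem_image]
  constructor
  · exact fun hx => ⟨x, hx, by rw [abs_of_nonneg (sub_nonneg.2 (S.min'_le x hx))]; ring⟩
  · rintro ⟨y, hy, rfl⟩
    rwa [abs_of_nonneg (sub_nonneg.2 (S.min'_le y hy)), add_sub_cancel]

theorem eq_image_sub_dists_max' {S : Finset ℝ} (hS : S.Nonempty) :
    S = (S.dists (S.max' hS)).image (S.max' hS - ·) := by
  ext x
  simp only [dists, image_image, Function.comp_def, mem_image]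
  constructor
  · exact fun hx => ⟨x, hx, by rw [abs_of_nonpos (sub_nonpos.2 (S.le_max' x hx))]; ring⟩
  · rintro ⟨y, hy, rfl⟩
    rwa [abs_of_nonpos (sub_nonpos.2 (S.le_max' y hy)), neg_sub, sub_sub_cancel]

theorem max'_sub_min'_le_of_forall_exists_dists_eq {S Q : Finset ℝ} (hS : S.Nonempty)
    (hQ : Q.Nonempty) (h : ∀ q ∈ Q, ∃ p ∈ S, Q.dists q = S.dists p) :
    Q.max' hQ - Q.min' hQ ≤ S.max' hS - S.min' hS := by
  obtain ⟨p, hp, hqp⟩ := h _ (Q.min'_mem hQ)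
  obtain ⟨x, hx, hxp⟩ := mem_image.1 (hqp ▸ max'_sub_min'_mem_dists_min' hQ)
  exact hxp ▸ abs_sub_le_max'_sub_min' hS hx hp


theorem eq_min'_or_eq_max'_of_dists_min'_eq {S Q : Finset ℝ} (hS : S.Nonempty) (hQ : Q.Nonempty)
    (hSQ : ∀ p ∈ S, ∃ q ∈ Q, S.dists p = Q.dists q)
    (hQS : ∀ q ∈ Q, ∃ p ∈ S, Q.dists q = S.dists p) {q : ℝ} (hq : q ∈ Q)
    (h : S.dists (S.min' hS) = Q.dists q) : q = Q.min' hQ ∨ q = Q.max' hQ := by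
  have hdiam : S.max' hS - S.min' hS = Q.max' hQ - Q.min' hQ :=
    le_antisymm (max'_sub_min'_le_of_forall_exists_dists_eq hQ hS hSQ)
      (max'_sub_min'_le_of_forall_exists_dists_eq hS hQ hQS)
  obtain ⟨r, hr, hrq⟩ := mem_image.1 (h ▸ max'_sub_min'_mem_dists_min' hS)
  exact eq_min'_or_eq_max'_of_abs_sub_eq hQ hr hq (hrq.trans hdiam)

theorem image_add_eq_of_dists_min'_eq {S Q : Finset ℝ} (hS : S.Nonempty) (hQ : Q.Nonempty)
    (h : S.dists (S.min' hS) = Q.dists (Q.min' hQ)) :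
    S.image (· + (Q.min' hQ - S.min' hS)) = Q :=
  calc S.image (· + (Q.min' hQ - S.min' hS))
      = ((S.dists (S.min' hS)).image (S.min' hS + ·)).image (· + (Q.min' hQ - S.min' hS)) := by
        rw [← eq_image_add_dists_min' hS]
    _ = (Q.dists (Q.min' hQ)).image (Q.min' hQ + ·) := by
        rw [image_image, h]
        congr 1
        funext x
        simp only [Function.comp_apply]
        ring
    _ = Q := (eq_image_add_dists_min' hQ).symm

theorem image_neg_add_eq_of_dists_min'_eq_dists_max' {S Q : Finset ℝ} (hS : S.Nonempty)
    (hQ : Q.Nonempty) (h : S.dists (S.min' hS) = Q.dists (Q.max' hQ)) :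
    S.image (-· + (Q.max' hQ + S.min' hS)) = Q :=
  calc S.image (-· + (Q.max' hQ + S.min' hS))
      = ((S.dists (S.min' hS)).image (S.min' hS + ·)).image (-· + (Q.max' hQ + S.min' hS)) := by
        rw [← eq_image_add_dists_min' hS]
    _ = (Q.dists (Q.max' hQ)).image (Q.max' hQ - ·) := by
        rw [image_image, h]
        congr 1
        funext x
        simp only [Function.comp_apply]
        ring
    _ = Q := (eq_image_sub_dists_max' hQ).symm

end Finset

theorem stmt_6_general (S Q : Finset ℝ)
    (e : {x // x ∈ S} ≃ {x // x ∈ Q})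
    (he : ∀ p : {x // x ∈ S}, row S (p : ℝ) = row Q ((e p : ℝ))) :
    ∃ t : ℝ, Q = S.image (fun x => x + t) ∨ Q = S.image (fun x => -x + t) := by
  have hSQ : ∀ p ∈ S, ∃ q ∈ Q, S.dists p = Q.dists q := fun p hp =>
    ⟨e ⟨p, hp⟩, (e ⟨p, hp⟩).2, Finset.dists_eq_of_row_eq hp (e ⟨p, hp⟩).2 (he ⟨p, hp⟩)⟩
  have hQS : ∀ q ∈ Q, ∃ p ∈ S, Q.dists q = S.dists p := fun q hq => by
    obtain ⟨p, hpq⟩ := e.surjective ⟨q, hq⟩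
    have hrow : row S p = row Q q := by rw [he p, hpq]
    exact ⟨p, p.2, (Finset.dists_eq_of_row_eq p.2 hq hrow).symm⟩
  rcases S.eq_empty_or_nonempty with rfl | hS
  · refine ⟨0, Or.inl ?_⟩
    simpa [Finset.eq_empty_iff_forall_notMem] using hQS
  obtain ⟨q, hq, hdists⟩ := hSQ _ (S.min'_mem hS)
  have hQ : Q.Nonempty := ⟨q, hq⟩
  rcases Finset.eq_min'_or_eq_max'_of_dists_min'_eq hS hQ hSQ hQS hq hdists with rfl | rfl
  · exact ⟨_, Or.inl (Finset.image_add_eq_of_dists_min'_eq hS hQ hdists).symm⟩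
  · exact ⟨_, Or.inr (Finset.image_neg_add_eq_of_dists_min'_eq_dists_max' hS hQ hdists).symm⟩

/-- If `S, Q ⊂ ℝ` are finite sets of the same cardinality
`m ≥ 2` and the multiset of rows of points of `S` equals the multiset of rows
of points of `Q` (i.e. there is a bijection between the points identifying
their rows), then some isometry of `ℝ` (a map `x ↦ x + t` or `x ↦ −x + t`)
takes `S` onto `Q`. -/
theorem stmt_6 (m : ℕ) (hm : 2 ≤ m) (S Q : Finset ℝ)
    (hScard : S.card = m) (hQcard : Q.card = m)
    (e : {x // x ∈ S} ≃ {x // x ∈ Q})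
    (he : ∀ p : {x // x ∈ S}, row S (p : ℝ) = row Q ((e p : ℝ))) :
    ∃ t : ℝ, Q = S.image (fun x => x + t) ∨ Q = S.image (fun x => -x + t) :=
  stmt_6_general S Q e he
end

section
/- Let S = M + Lℤ ⊆ ℝ be a periodic sequence with period L > 0 and a motif M ⊂ [0,L) of exactly m points. Then for every p ∈ S, the m-th smallest element of the set {q − p : q ∈ S, q > p} of rightward distances of p equals L. -/
/-- Let `S = M + Lℤ ⊆ ℝ` be a periodic sequence with period
`L > 0` and motif `M ⊂ [0,L)` of exactly `m` points. Then for every `p ∈ S`,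
the `m`-th smallest element of the set `{q − p : q ∈ S, q > p}` of rightward
distances of `p` equals `L`; that is, `L` is a rightward distance of `p` and
exactly `m − 1` rightward distances of `p` are smaller than `L`. -/
theorem stmt_7 (m : ℕ) (hm : 1 ≤ m) (L : ℝ) (hL : 0 < L)
    (M : Finset ℝ) (hMcard : M.card = m) (hMsub : ∀ a ∈ M, a ∈ Set.Ico 0 L)
    (S : Set ℝ) (hS : S = {x : ℝ | ∃ a ∈ M, ∃ z : ℤ, x = a + L * z})
    (p : ℝ) (hp : p ∈ S) :
    L ∈ {d : ℝ | ∃ q ∈ S, p < q ∧ d = q - p} ∧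
    {d : ℝ | (∃ q ∈ S, p < q ∧ d = q - p) ∧ d < L}.Finite ∧
    {d : ℝ | (∃ q ∈ S, p < q ∧ d = q - p) ∧ d < L}.ncard = m - 1 := by
  subst hS
  obtain ⟨a0, ha0, z0, hz0⟩ := hp
  -- Part 1
  have part1 : L ∈ {d : ℝ | ∃ q ∈ {x : ℝ | ∃ a ∈ M, ∃ z : ℤ, x = a + L * z}, p < q ∧ d = q - p} := by
    refine ⟨p + L, ⟨a0, ha0, z0 + 1, by push_cast; linarith [hz0]⟩, by linarith, by ring⟩
  -- the canonical representative map
  set f : ℝ → ℝ := fun a => a + L * ⌈(p - a) / L⌉ - p with hf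
  have hmem : ∀ a : ℝ, 0 ≤ f a ∧ f a < L := by
    intro a
    have h1 : (p - a) / L ≤ (⌈(p - a) / L⌉ : ℝ) := Int.le_ceil _
    have h2 : (⌈(p - a) / L⌉ : ℝ) < (p - a) / L + 1 := Int.ceil_lt_add_one _
    constructor
    · have := (div_le_iff₀ hL).mp (by linarith : (p - a) / L ≤ (⌈(p - a) / L⌉ : ℝ))
      simp only [hf]; nlinarith
    · have := (lt_div_iff₀ hL).mp (by linarith : ((⌈(p - a) / L⌉ : ℝ) - 1) < (p - a) / L)
      simp only [hf]; nlinarith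
  have huniq : ∀ a : ℝ, ∀ z : ℤ, p ≤ a + L * z → a + L * z < p + L → (⌈(p - a) / L⌉ : ℤ) = z := by
    intro a z h1 h2
    rw [Int.ceil_eq_iff]
    constructor
    · rw [lt_div_iff₀ hL]; push_cast; nlinarith
    · rw [div_le_iff₀ hL]; nlinarith
  set F : Finset ℝ := M.image f with hF
  have hinj : Set.InjOn f M := by
    intro a ha b hb hab
    obtain ⟨ha0', ha1⟩ := hMsub a ha
    obtain ⟨hb0', hb1⟩ := hMsub b hb
    simp only [hf] at hab
    have h : a - b = L * ((⌈(p - b) / L⌉ : ℝ) - ⌈(p - a) / L⌉) := by linarith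
    have hz : ((⌈(p - b) / L⌉ - ⌈(p - a) / L⌉ : ℤ) : ℝ) = (a - b) / L := by
      push_cast; rw [h]; field_simp
    have habs : |(a - b) / L| < 1 := by
      rw [abs_lt]; constructor
      · rw [lt_div_iff₀ hL]; linarith
      · rw [div_lt_iff₀ hL]; linarith
    have : (⌈(p - b) / L⌉ - ⌈(p - a) / L⌉ : ℤ) = 0 := by
      have h1 : |((⌈(p - b) / L⌉ - ⌈(p - a) / L⌉ : ℤ) : ℝ)| < 1 := by rw [hz]; exact habs
      rw [← Int.cast_abs] at h1
      have h2 : |(⌈(p - b) / L⌉ - ⌈(p - a) / L⌉ : ℤ)| < 1 := by exact_mod_cast h1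
      rw [abs_lt] at h2; omega
    have : ((⌈(p - b) / L⌉ - ⌈(p - a) / L⌉ : ℤ) : ℝ) = 0 := by exact_mod_cast this
    rw [hz] at this
    have := (div_eq_zero_iff.mp this).resolve_right (ne_of_gt hL)
    linarith
  have hFcard : F.card = m := by
    rw [hF, Finset.card_image_of_injOn hinj, hMcard]
  have h0F : (0 : ℝ) ∈ F := by
    rw [hF, Finset.mem_image]
    refine ⟨a0, ha0, ?_⟩
    have : (⌈(p - a0) / L⌉ : ℤ) = z0 := by
      apply huniq <;> rw [hz0] <;> linarith [hL]
    simp only [hf, this]; rw [hz0]; ring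
  -- the set equals F.erase 0
  have hset : {d : ℝ | (∃ q ∈ {x : ℝ | ∃ a ∈ M, ∃ z : ℤ, x = a + L * z}, p < q ∧ d = q - p) ∧ d < L}
      = ↑(F.erase 0) := by
    ext d
    simp only [Set.mem_setOf_eq, Finset.coe_erase, Set.mem_diff, Finset.mem_coe,
      Set.mem_singleton_iff]
    constructor
    · rintro ⟨⟨q, ⟨a, ha, z, hq⟩, hpq, hd⟩, hdL⟩
      have hz : (⌈(p - a) / L⌉ : ℤ) = z := by
        apply huniq <;> rw [← hq] <;> linarith
      constructor
      · rw [hF, Finset.mem_image]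
        exact ⟨a, ha, by simp only [hf, hz]; rw [← hq]; linarith⟩
      · intro h0; rw [h0] at hd; linarith
    · rintro ⟨hdF, hd0⟩
      rw [hF, Finset.mem_image] at hdF
      obtain ⟨a, ha, hfa⟩ := hdF
      obtain ⟨hge, hlt⟩ := hmem a
      refine ⟨⟨d + p, ⟨a, ha, ⌈(p - a) / L⌉, by simp only [hf] at hfa; linarith⟩, ?_, by ring⟩, ?_⟩
      · rcases lt_or_eq_of_le (hfa ▸ hge) with h | h
        · linarith
        · exact absurd h.symm hd0
      · rw [← hfa]; exact hlt
  rw [hset]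
  refine ⟨part1, (F.erase 0).finite_toSet, ?_⟩
  rw [Set.ncard_coe_finset, Finset.card_erase_of_mem h0F, hFcard]
end

section
/- Let S = M + Lℤ and Q = M' + L'ℤ be periodic sequences in ℝ with periods L, L' > 0 and motifs M ⊂ [0,L), M' ⊂ [0,L') each consisting of exactly m points. For a point p of such a set, let row(p) ∈ ℝ^m be the increasing list of the m smallest rightward distances of p. Then Q is a translate of S (i.e. Q = {p + t : p ∈ S} for some t ∈ ℝ) if and only if the multiset {row(p) : p ∈ M} computed in S equals the multiset {row(p) : p ∈ M'} computed in Q. -/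
/-- `r : Fin m → ℝ` is the row of `p` in `S ⊆ ℝ`: the increasing list of the
`m` smallest rightward distances of `p` in `S`. -/
def IsRow (S : Set ℝ) {m : ℕ} (p : ℝ) (r : Fin m → ℝ) : Prop :=
  StrictMono r ∧ (∀ i, ∃ q ∈ S, p < q ∧ q - p = r i) ∧
  (∀ q ∈ S, p < q → (∃ i, r i = q - p) ∨ (∀ i, r i < q - p))

lemma int_mul_small {L x : ℝ} (hL : 0 < L) (z : ℤ) (hx : x = L * z) (h : |x| < L) : x = 0 := by
  have hz : |(z : ℝ)| < 1 := by
    rw [hx, abs_mul, abs_of_pos hL] at h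
    nlinarith [abs_nonneg (z:ℝ)]
  rw [← Int.cast_abs] at hz
  have hz2 : |z| < 1 := by exact_mod_cast hz
  rw [abs_lt] at hz2
  have : z = 0 := by omega
  simp [hx, this]

lemma struct {m : ℕ} {L : ℝ} (hL : 0 < L)
    {M : Finset ℝ} (hMcard : M.card = m) (hMsub : ∀ a ∈ M, a ∈ Set.Ico 0 L)
    {S : Set ℝ} (hS : S = {x : ℝ | ∃ a ∈ M, ∃ z : ℤ, x = a + L * z})
    {p : ℝ} (hp : p ∈ S) {r : Fin m → ℝ} (hr : IsRow S p r) :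
    (∃ i, r i = L) ∧ (∀ i, 0 < r i ∧ r i ≤ L) ∧
    S = {x : ℝ | ∃ i : Fin m, ∃ z : ℤ, x = p + r i + L * z} := by
  classical
  have hSclosed : ∀ x ∈ S, ∀ z : ℤ, x + L * z ∈ S := by
    rintro x hx z
    rw [hS] at hx ⊢
    obtain ⟨a, ha, w, rfl⟩ := hx
    exact ⟨a, ha, w + z, by push_cast; ring⟩
  set f : ℝ → ℝ := fun a => a + L * ((⌊(p - a) / L⌋ + 1 : ℤ) : ℝ) with hf
  have hfIoc : ∀ a : ℝ, f a ∈ Set.Ioc p (p + L) := by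
    intro a
    have h1 : (p - a) / L < (⌊(p - a) / L⌋ : ℝ) + 1 := Int.lt_floor_add_one _
    have h2 : ((⌊(p - a) / L⌋ : ℝ)) ≤ (p - a) / L := Int.floor_le _
    have hx : L * ((p - a) / L) = p - a := by field_simp
    constructor
    · simp only [hf]; push_cast; nlinarith
    · simp only [hf]; push_cast; nlinarith
  have hIoc_unique : ∀ u v : ℝ, u ∈ Set.Ioc p (p + L) → v ∈ Set.Ioc p (p + L) →
      ∀ z : ℤ, u - v = L * z → u = v := by
    rintro u v ⟨hu1, hu2⟩ ⟨hv1, hv2⟩ z hz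
    have : u - v = 0 := int_mul_small hL z hz (abs_lt.mpr ⟨by linarith, by linarith⟩)
    linarith
  have hinjOn : Set.InjOn f ↑M := by
    intro a ha b hb hab
    obtain ⟨ha0, haL⟩ := hMsub a ha
    obtain ⟨hb0, hbL⟩ := hMsub b hb
    have : a - b = L * ((((⌊(p - b) / L⌋ + 1) - (⌊(p - a) / L⌋ + 1) : ℤ)) : ℝ) := by
      simp only [hf] at hab; push_cast at hab ⊢; linarith
    have h0 : a - b = 0 := int_mul_small hL _ this (abs_lt.mpr ⟨by linarith, by linarith⟩)
    linarith
  set F : Finset ℝ := M.image f with hFdef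
  have hFcard : F.card = m := by rw [hFdef, Finset.card_image_of_injOn hinjOn, hMcard]
  have hFS : ∀ q ∈ F, q ∈ S := by
    intro q hq
    obtain ⟨a, ha, rfl⟩ := Finset.mem_image.mp hq
    rw [hS]
    exact ⟨a, ha, ⌊(p - a) / L⌋ + 1, rfl⟩
  have hFIoc : ∀ q ∈ F, q ∈ Set.Ioc p (p + L) := by
    intro q hq
    obtain ⟨a, ha, rfl⟩ := Finset.mem_image.mp hq
    exact hfIoc a
  have hFcomplete : ∀ q ∈ S, q ∈ Set.Ioc p (p + L) → q ∈ F := by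
    intro q hq hqI
    rw [hS] at hq
    obtain ⟨a, ha, z, rfl⟩ := hq
    have hfa : f a ∈ Set.Ioc p (p + L) := hfIoc a
    have hdiff : (a + L * z) - f a = L * (((z - (⌊(p - a) / L⌋ + 1) : ℤ)) : ℝ) := by
      simp only [hf]; push_cast; ring
    have := hIoc_unique _ _ hqI hfa _ hdiff
    rw [this]
    exact Finset.mem_image_of_mem f ha
  have hpLF : p + L ∈ F := by
    apply hFcomplete
    · have := hSclosed p hp 1; simpa using this
    · exact ⟨by linarith, le_refl _⟩
  obtain ⟨hmono, hex, hcov⟩ := hr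
  have hrpos : ∀ i, 0 < r i := by
    intro i; obtain ⟨q, hq, hpq, hd⟩ := hex i; linarith
  have hrS : ∀ i, p + r i ∈ S := by
    intro i; obtain ⟨q, hq, hpq, hd⟩ := hex i
    have : q = p + r i := by linarith
    rwa [← this]
  set R : Finset ℝ := Finset.image (fun i => p + r i) Finset.univ with hRdef
  have hRcard : R.card = m := by
    rw [hRdef, Finset.card_image_of_injective _ (fun i j h => hmono.injective (by linarith : r i = r j))]
    simp
  have hFR : F ⊆ R := by
    intro q hq
    rcases hcov q (hFS q hq) (hFIoc q hq).1 with ⟨i, hi⟩ | hall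
    · exact Finset.mem_image.mpr ⟨i, Finset.mem_univ i, by linarith⟩
    · exfalso
      have hq2 : q ≤ p + L := (hFIoc q hq).2
      have hsub : insert q R ⊆ F := by
        intro x hx
        rcases Finset.mem_insert.mp hx with rfl | hx
        · exact hq
        · obtain ⟨i, -, rfl⟩ := Finset.mem_image.mp hx
          exact hFcomplete _ (hrS i) ⟨by linarith [hrpos i], by linarith [hall i]⟩
      have hqR : q ∉ R := by
        intro hqq
        obtain ⟨i, -, hi⟩ := Finset.mem_image.mp hqq
        have := hall i; linarith
      have hcl := Finset.card_le_card hsub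
      rw [Finset.card_insert_of_notMem hqR, hRcard, hFcard] at hcl
      omega
  have hRF : F = R := Finset.eq_of_subset_of_card_le hFR (by rw [hRcard, hFcard])
  have hriF : ∀ i, p + r i ∈ F := by
    intro i
    rw [hRF]
    exact Finset.mem_image.mpr ⟨i, Finset.mem_univ i, rfl⟩
  have hbnds : ∀ i, 0 < r i ∧ r i ≤ L := by
    intro i
    have := hFIoc _ (hriF i)
    exact ⟨hrpos i, by linarith [this.2]⟩
  have hLmem : ∃ i, r i = L := by
    rw [hRF] at hpLF
    obtain ⟨i, -, hi⟩ := Finset.mem_image.mp hpLF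
    exact ⟨i, by linarith⟩
  refine ⟨hLmem, hbnds, ?_⟩
  ext x
  simp only [Set.mem_setOf_eq]
  constructor
  · intro hx
    have hw : f x ∈ S := hSclosed x hx (⌊(p - x) / L⌋ + 1)
    have hwF : f x ∈ F := hFcomplete _ hw (hfIoc x)
    rw [hRF] at hwF
    obtain ⟨i, -, hi⟩ := Finset.mem_image.mp hwF
    refine ⟨i, -((⌊(p - x) / L⌋ + 1 : ℤ)), ?_⟩
    simp only [hf] at hi
    push_cast
    push_cast at hi
    linarith
  · rintro ⟨i, z, rfl⟩
    exact hSclosed _ (hrS i) z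

lemma strictMono_eq_of_exch {m : ℕ} {r r' : Fin m → ℝ} (h : StrictMono r) (h' : StrictMono r')
    (hsub : ∀ i, ∃ j, r i = r' j) : r = r' := by
  classical
  set A : Finset ℝ := Finset.image r Finset.univ with hA
  set B : Finset ℝ := Finset.image r' Finset.univ with hB
  have hAcard : A.card = m := by
    rw [hA, Finset.card_image_of_injective _ h.injective, Finset.card_univ, Fintype.card_fin]
  have hBcard : B.card = m := by
    rw [hB, Finset.card_image_of_injective _ h'.injective, Finset.card_univ, Fintype.card_fin]
  have hAB : A = B := by
    apply Finset.eq_of_subset_of_card_le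
    · intro x hx
      obtain ⟨i, -, rfl⟩ := Finset.mem_image.mp hx
      obtain ⟨j, hj⟩ := hsub i
      exact Finset.mem_image.mpr ⟨j, Finset.mem_univ j, hj.symm⟩
    · rw [hAcard, hBcard]
  have e1 : OrderEmbedding.ofStrictMono r h = A.orderEmbOfFin hAcard :=
    Finset.orderEmbOfFin_unique' hAcard
      (fun x => Finset.mem_image.mpr ⟨x, Finset.mem_univ x, rfl⟩)
  have e2 : OrderEmbedding.ofStrictMono r' h' = A.orderEmbOfFin hAcard :=
    Finset.orderEmbOfFin_unique' hAcard
      (fun x => by rw [hAB]; exact Finset.mem_image.mpr ⟨x, Finset.mem_univ x, rfl⟩)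
  funext i
  have := congrArg (fun e : Fin m ↪o ℝ => e i) (e1.trans e2.symm)
  simpa using this

lemma isRow_unique {m : ℕ} {L : ℝ} (hL : 0 < L)
    {M : Finset ℝ} (hMcard : M.card = m) (hMsub : ∀ a ∈ M, a ∈ Set.Ico 0 L)
    {S : Set ℝ} (hS : S = {x : ℝ | ∃ a ∈ M, ∃ z : ℤ, x = a + L * z})
    {p : ℝ} (hp : p ∈ S) {r r' : Fin m → ℝ}
    (hr : IsRow S p r) (hr' : IsRow S p r') : r = r' := by
  obtain ⟨-, hb, -⟩ := struct hL hMcard hMsub hS hp hr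
  obtain ⟨-, hb', hSeq'⟩ := struct hL hMcard hMsub hS hp hr'
  apply strictMono_eq_of_exch hr.1 hr'.1
  intro i
  have hri : p + r i ∈ S := by
    obtain ⟨q, hq, hpq, hd⟩ := hr.2.1 i
    have : q = p + r i := by linarith
    rwa [← this]
  rw [hSeq'] at hri
  obtain ⟨j, z, hz⟩ := hri
  have hd : r i - r' j = L * (z : ℝ) := by linarith
  have h0 : r i - r' j = 0 := by
    refine int_mul_small hL z hd (abs_lt.mpr ⟨?_, ?_⟩)
    · linarith [(hb i).1, (hb' j).2]
    · linarith [(hb i).2, (hb' j).1]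
  exact ⟨j, by linarith⟩

lemma isRow_translate {m : ℕ} {S : Set ℝ} {p : ℝ} {r : Fin m → ℝ} (t : ℝ)
    (h : IsRow S p r) : IsRow ((fun x => x + t) '' S) (p + t) r := by
  obtain ⟨h1, h2, h3⟩ := h
  refine ⟨h1, ?_, ?_⟩
  · intro i
    obtain ⟨q, hq, hpq, hd⟩ := h2 i
    exact ⟨q + t, ⟨q, hq, rfl⟩, by linarith, by linarith⟩
  · rintro q ⟨x, hx, rfl⟩ hpq
    have hpq' : p < x := by
      have h4 : p + t < x + t := hpq
      linarith
    rcases h3 x hx hpq' with ⟨i, hi⟩ | hall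
    · left; exact ⟨i, by show r i = x + t - (p + t); rw [hi]; ring⟩
    · right; intro i; have := hall i; show r i < x + t - (p + t); linarith

lemma image_add_add (S : Set ℝ) (u : ℝ) :
    (fun x => x + (-u)) '' ((fun x => x + u) '' S) = S := by
  rw [← Set.image_comp]
  have : ((fun x : ℝ => x + (-u)) ∘ (fun x : ℝ => x + u)) = id := by
    funext x; simp
  rw [this, Set.image_id]

lemma periodic_image {L : ℝ} {M : Finset ℝ} {S : Set ℝ}
    (hS : S = {x : ℝ | ∃ a ∈ M, ∃ z : ℤ, x = a + L * z}) (z : ℤ) :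
    (fun x => x + L * z) '' S = S := by
  ext x
  simp only [Set.mem_image]
  constructor
  · rintro ⟨y, hy, rfl⟩
    rw [hS] at hy ⊢
    obtain ⟨a, ha, w, rfl⟩ := hy
    exact ⟨a, ha, w + z, by push_cast; ring⟩
  · intro hx
    rw [hS] at hx
    obtain ⟨a, ha, w, rfl⟩ := hx
    refine ⟨a + L * ((w - z : ℤ) : ℝ), ?_, by push_cast; ring⟩
    rw [hS]
    exact ⟨a, ha, w - z, rfl⟩

/-- Let `S = M + Lℤ` and `Q = M' + L'ℤ` be periodic sequences
with periods `L, L' > 0` and motifs `M ⊂ [0,L)`, `M' ⊂ [0,L')` of exactly `m`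
points each, and for each motif point let `row(p) ∈ ℝ^m` be the increasing
list of its `m` smallest rightward distances. Then `Q` is a translate of `S`
if and only if the multiset of rows of motif points of `S` equals the multiset
of rows of motif points of `Q`. -/
theorem stmt_8 (m : ℕ) (hm : 1 ≤ m) (L L' : ℝ) (hL : 0 < L) (hL' : 0 < L')
    (M M' : Finset ℝ) (hMcard : M.card = m) (hM'card : M'.card = m)
    (hMsub : ∀ a ∈ M, a ∈ Set.Ico 0 L) (hM'sub : ∀ a ∈ M', a ∈ Set.Ico 0 L')
    (S Q : Set ℝ)
    (hS : S = {x : ℝ | ∃ a ∈ M, ∃ z : ℤ, x = a + L * z})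
    (hQ : Q = {x : ℝ | ∃ a ∈ M', ∃ z : ℤ, x = a + L' * z})
    (rowS rowQ : ℝ → Fin m → ℝ)
    (hrowS : ∀ p ∈ M, IsRow S p (rowS p))
    (hrowQ : ∀ p ∈ M', IsRow Q p (rowQ p)) :
    (∃ t : ℝ, Q = (fun x => x + t) '' S) ↔ M.val.map rowS = M'.val.map rowQ := by
  classical
  have hMS : ∀ a ∈ M, a ∈ S := by
    intro a ha; rw [hS]; exact ⟨a, ha, 0, by simp⟩
  have hMQ : ∀ a ∈ M', a ∈ Q := by
    intro a ha; rw [hQ]; exact ⟨a, ha, 0, by simp⟩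
  constructor
  · rintro ⟨t, hQt⟩
    -- key: every motif point of Q has the row of some motif point of S
    have key : ∀ p' ∈ M', ∃ a ∈ M, (∃ z : ℤ, p' = a + L * z + t) ∧ rowQ p' = rowS a := by
      intro p' hp'
      have hp'Q : p' ∈ Q := hMQ p' hp'
      rw [hQt] at hp'Q
      obtain ⟨y, hyS, hy⟩ := hp'Q
      rw [hS] at hyS
      obtain ⟨a, ha, z, rfl⟩ := hyS
      have hyeq : a + L * z + t = p' := hy
      have himg : (fun x => x + (L * z + t)) '' S = Q := by
        have hc : ((fun x : ℝ => x + t) ∘ (fun x : ℝ => x + L * z)) =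
            fun x : ℝ => x + (L * z + t) := by
          funext x; simp only [Function.comp_apply]; ring
        rw [hQt]
        conv_rhs => rw [← periodic_image hS z, ← Set.image_comp]
        rw [hc]
      have h1 : IsRow ((fun x => x + (L * z + t)) '' S) (a + (L * z + t)) (rowQ p') := by
        rw [himg]
        have : a + (L * z + t) = p' := by linarith
        rw [this]
        exact hrowQ p' hp'
      have h2 : IsRow S a (rowQ p') := by
        have h3 := isRow_translate (-(L * z + t)) h1
        rw [image_add_add] at h3
        have he : a + (L * z + t) + -(L * z + t) = a := by ring
        rwa [he] at h3
      exact ⟨a, ha, ⟨z, by linarith⟩,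
        isRow_unique hL hMcard hMsub hS (hMS a ha) h2 (hrowS a ha)⟩
    -- L = L'
    have hM'ne : M'.Nonempty := Finset.card_pos.mp (by omega)
    obtain ⟨p0, hp0⟩ := hM'ne
    obtain ⟨a0, ha0, -, hrow0⟩ := key p0 hp0
    have hLL' : L = L' := by
      obtain ⟨⟨i, hi⟩, hbS, -⟩ := struct hL hMcard hMsub hS (hMS a0 ha0) (hrowS a0 ha0)
      obtain ⟨⟨j, hj⟩, hbQ, -⟩ := struct hL' hM'card hM'sub hQ (hMQ p0 hp0) (hrowQ p0 hp0)
      rw [hrow0] at hj hbQ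
      have h1 : L ≤ L' := by
        have := (hbQ i).2; rw [hi] at this; exact this
      have h2 : L' ≤ L := by
        have := (hbS j).2; rw [hj] at this; exact this
      linarith
    -- the matching function
    set g : ℝ → ℝ := fun p' =>
      if h : ∃ a ∈ M, (∃ z : ℤ, p' = a + L * z + t) ∧ rowQ p' = rowS a
      then h.choose else 0 with hg
    have gspec : ∀ p' ∈ M', g p' ∈ M ∧ (∃ z : ℤ, p' = g p' + L * z + t) ∧
        rowQ p' = rowS (g p') := by
      intro p' hp'
      have hk := key p' hp'
      simp only [hg, dif_pos hk]
      exact hk.choose_spec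
    have hginj : Set.InjOn g ↑M' := by
      intro p1 hp1 p2 hp2 hgeq
      obtain ⟨-, ⟨z1, hz1⟩, -⟩ := gspec p1 hp1
      obtain ⟨-, ⟨z2, hz2⟩, -⟩ := gspec p2 hp2
      rw [hgeq] at hz1
      have hd : p1 - p2 = L * ((z1 - z2 : ℤ) : ℝ) := by push_cast; linarith
      obtain ⟨hq1, hq2⟩ := hM'sub p1 hp1
      obtain ⟨hq3, hq4⟩ := hM'sub p2 hp2
      rw [← hLL'] at hq2 hq4
      have := int_mul_small hL _ hd (abs_lt.mpr ⟨by linarith, by linarith⟩)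
      linarith
    have himgM : M'.image g = M := by
      apply Finset.eq_of_subset_of_card_le
      · intro x hx
        obtain ⟨p', hp', rfl⟩ := Finset.mem_image.mp hx
        exact (gspec p' hp').1
      · rw [Finset.card_image_of_injOn hginj, hM'card, hMcard]
    calc M.val.map rowS = (M'.image g).val.map rowS := by rw [himgM]
      _ = (M'.val.map g).map rowS := by rw [Finset.image_val_of_injOn hginj]
      _ = M'.val.map (rowS ∘ g) := by rw [Multiset.map_map]
      _ = M'.val.map rowQ := Multiset.map_congr rfl
          (fun x hx => ((gspec x (Finset.mem_val.mp hx)).2.2).symm)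
  · intro h
    have hMne : M.Nonempty := Finset.card_pos.mp (by omega)
    obtain ⟨p, hp⟩ := hMne
    have hmem : rowS p ∈ M'.val.map rowQ := by
      rw [← h]
      exact Multiset.mem_map_of_mem rowS (Finset.mem_val.mpr hp)
    obtain ⟨p', hp'v, hrr⟩ := Multiset.mem_map.mp hmem
    have hp' : p' ∈ M' := Finset.mem_val.mp hp'v
    obtain ⟨⟨i, hiL⟩, hbS, hSeq⟩ := struct hL hMcard hMsub hS (hMS p hp) (hrowS p hp)
    obtain ⟨⟨j, hjL'⟩, hbQ, hQeq⟩ := struct hL' hM'card hM'sub hQ (hMQ p' hp') (hrowQ p' hp')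
    rw [hrr] at hjL' hbQ hQeq
    have hLL' : L' = L := by
      have h1 : L ≤ L' := by have := (hbQ i).2; rw [hiL] at this; exact this
      have h2 : L' ≤ L := by have := (hbS j).2; rw [hjL'] at this; exact this
      linarith
    subst hLL'
    refine ⟨p' - p, ?_⟩
    rw [hQeq, hSeq]
    ext x
    simp only [Set.mem_image, Set.mem_setOf_eq]
    constructor
    · rintro ⟨i, z, rfl⟩
      exact ⟨p + rowS p i + L' * z, ⟨i, z, rfl⟩, by ring⟩
    · rintro ⟨y, ⟨i, z, rfl⟩, rfl⟩
      exact ⟨i, z, by ring⟩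
end

section
/- Let S, Q ⊂ ℝⁿ be finite sets and g : S → Q a bijection with |p − g(p)| ≤ ε for every p ∈ S, where ε ≥ 0. Fix an integer h ≥ 1 with |S| ≥ h+1. Then for every p ∈ S and every h-element subset T of S∖{p}, |A(p,T) − A(g(p), g(T))| ≤ 2ε; consequently, for every i with 1 ≤ i ≤ C(|S|−1, h), the i-th smallest h-order average at p over h-element subsets of S∖{p} and the i-th smallest h-order average at g(p) over h-element subsets of Q∖{g(p)} differ by at most 2ε. -/
/-!
Moving every point by at most `ε` changes each pairwise distance by at most `2ε`
(diagonal pairs not at all), so the `h(h+1)/2` distances averaged in `A(p,T)` all move by at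
most `2ε` and so does their mean. Since `g` induces a bijection between the `h`-subsets of
`S ∖ {p}` and those of `Q ∖ {g p}`, the two lists of averages are matched with every pair
within `2ε`; sorting does not increase the largest displacement of such a matching, by the
usual exchange argument on the smallest elements.
-/

open scoped Classical

/-- The h-order average of a point `p` together with a finite set `T` of
points: the mean `(2/(h(h+1))) Σ_{0≤i<j≤h} dist(p_i,p_j)` of all pairwise
distances among the `h+1` points `p, T` (for `T` of cardinality `h` not
containing `p`). -/
noncomputable def horderAvg {E : Type*} [PseudoMetricSpace E] (h : ℕ)
    (p : E) (T : Finset E) : ℝ :=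
  2 / ((h : ℝ) * ((h : ℝ) + 1)) *
    ((∑ q ∈ T, dist p q) + (∑ q ∈ T, ∑ r ∈ T, dist q r) / 2)

/-- The `i`-th smallest h-order average at a point `p` of a finite set `S`:
the `i`-th entry of the list of the h-order averages `A(p,T)` over all
`h`-element subsets `T` of `S∖{p}`, in increasing order with multiplicity. -/
noncomputable def ithAvg {E : Type*} [PseudoMetricSpace E] (h : ℕ)
    (S : Finset E) (p : E) (i : ℕ) : ℝ :=
  (Multiset.sort
    ((((S.erase p).powersetCard h).val).map (horderAvg h p)) (· ≤ ·)).getD (i - 1) 0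

section Sorting

variable {δ : ℝ}

theorem Multiset.rel_abs_sub_le_of_rel_cons_of_forall_le {a b : ℝ} {s t : Multiset ℝ}
    (ha : ∀ x ∈ s, a ≤ x) (hb : ∀ y ∈ t, b ≤ y)
    (hst : Multiset.Rel (fun x y => |x - y| ≤ δ) (a ::ₘ s) (b ::ₘ t)) :
    |a - b| ≤ δ ∧ Multiset.Rel (fun x y => |x - y| ≤ δ) s t := by
  obtain ⟨b₀, t₀, hab₀, hst₀, ht⟩ := Multiset.rel_cons_left.mp hst
  rcases Multiset.cons_eq_cons.mp ht with ⟨rfl, rfl⟩ | ⟨-, u, rfl, rfl⟩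
  · exact ⟨hab₀, hst₀⟩
  · obtain ⟨a₀, s₀, ha₀b, hsu, rfl⟩ := Multiset.rel_cons_right.mp hst₀
    -- exchange the partners of the two minima `a` and `b`
    have haa₀ := ha a₀ (Multiset.mem_cons_self _ _)
    have hbb₀ := hb b₀ (Multiset.mem_cons_self _ _)
    rw [abs_le] at hab₀ ha₀b
    exact ⟨abs_le.mpr ⟨by linarith, by linarith⟩,
      hsu.cons (abs_le.mpr ⟨by linarith, by linarith⟩)⟩

theorem List.forall₂_abs_sub_le_of_pairwise_of_rel :
    ∀ {l₁ l₂ : List ℝ}, l₁.Pairwise (· ≤ ·) → l₂.Pairwise (· ≤ ·) →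
      Multiset.Rel (fun x y => |x - y| ≤ δ) (l₁ : Multiset ℝ) l₂ →
      List.Forall₂ (fun x y => |x - y| ≤ δ) l₁ l₂
  | [], _, _, _, hrel => by
    rw [Multiset.coe_nil, Multiset.rel_zero_left, Multiset.coe_eq_zero] at hrel
    subst hrel
    exact .nil
  | _ :: _, [], _, _, hrel => by
    simp at hrel
  | a :: l₁, b :: l₂, h₁, h₂, hrel => by
    rw [List.pairwise_cons] at h₁ h₂
    obtain ⟨hab, hrel'⟩ := Multiset.rel_abs_sub_le_of_rel_cons_of_forall_le
      (fun x hx => h₁.1 x (Multiset.mem_coe.mp hx))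
      (fun y hy => h₂.1 y (Multiset.mem_coe.mp hy)) hrel
    exact .cons hab (forall₂_abs_sub_le_of_pairwise_of_rel h₁.2 h₂.2 hrel')

theorem List.Forall₂.abs_getD_sub_getD_le (hδ : 0 ≤ δ) {l₁ l₂ : List ℝ}
    (h : List.Forall₂ (fun x y => |x - y| ≤ δ) l₁ l₂) (i : ℕ) :
    |l₁.getD i 0 - l₂.getD i 0| ≤ δ := by
  induction h generalizing i with
  | nil => simpa using hδ
  | cons hab _ ih => cases i; exacts [hab, ih _]

theorem Multiset.abs_sort_getD_sub_sort_getD_le (hδ : 0 ≤ δ) {s t : Multiset ℝ}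
    (hst : Multiset.Rel (fun x y => |x - y| ≤ δ) s t) (i : ℕ) :
    |(s.sort (· ≤ ·)).getD i 0 - (t.sort (· ≤ ·)).getD i 0| ≤ δ := by
  refine List.Forall₂.abs_getD_sub_getD_le hδ ?_ i
  refine List.forall₂_abs_sub_le_of_pairwise_of_rel (s.pairwise_sort _) (t.pairwise_sort _) ?_
  rwa [Multiset.sort_eq, Multiset.sort_eq]

end Sorting

theorem Finset.sum_sum_eq_sum_offDiag {α M : Type*} [DecidableEq α] [AddCommMonoid M]
    (s : Finset α) {f : α → α → M} (hf : ∀ a, f a a = 0) :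
    ∑ a ∈ s, ∑ b ∈ s, f a b = ∑ x ∈ s.offDiag, f x.1 x.2 := by
  rw [← Finset.sum_product', ← Finset.diag_union_offDiag,
    Finset.sum_union s.disjoint_diag_offDiag,
    Finset.sum_eq_zero fun x hx => (Finset.mem_diag.mp hx).2 ▸ hf x.1, zero_add]

theorem Finset.abs_sum_sub_sum_le_card_mul {ι : Type*} (s : Finset ι) {f g : ι → ℝ}
    {δ : ℝ} (h : ∀ i ∈ s, |f i - g i| ≤ δ) :
    |∑ i ∈ s, f i - ∑ i ∈ s, g i| ≤ s.card * δ := by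
  rw [← Finset.sum_sub_distrib, ← nsmul_eq_mul]
  exact (Finset.abs_sum_le_sum_abs _ _).trans (s.sum_le_card_nsmul _ _ h)

theorem abs_dist_sub_dist_le_of_dist_le {E : Type*} [PseudoMetricSpace E] {ε : ℝ}
    {x y x' y' : E} (hx : dist x x' ≤ ε) (hy : dist y y' ≤ ε) :
    |dist x y - dist x' y'| ≤ 2 * ε := by
  rw [← Real.dist_eq]
  linarith [dist_dist_dist_le x y x' y']

theorem horderAvg_sub_horderAvg_image {E : Type*} [PseudoMetricSpace E] [DecidableEq E]
    {h : ℕ} {g : E → E} {T : Finset E} (hg : Set.InjOn g T) (p : E) :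
    horderAvg h p T - horderAvg h (g p) (T.image g) = 2 / (h * (h + 1)) *
      ((∑ q ∈ T, dist p q - ∑ q ∈ T, dist (g p) (g q)) +
        (∑ x ∈ T.offDiag, dist x.1 x.2 - ∑ x ∈ T.offDiag, dist (g x.1) (g x.2)) / 2) := by
  simp only [horderAvg, Finset.sum_image hg]
  rw [T.sum_sum_eq_sum_offDiag fun _ => dist_self _,
    T.sum_sum_eq_sum_offDiag (f := fun x y => dist (g x) (g y)) fun _ => dist_self _]
  ring

theorem abs_horderAvg_sub_horderAvg_image_le {E : Type*} [PseudoMetricSpace E] [DecidableEq E]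
    {h : ℕ} {ε : ℝ} {g : E → E} {S : Finset E} (hg : Set.InjOn g S)
    (hclose : ∀ x ∈ S, dist x (g x) ≤ ε) {p : E} (hp : p ∈ S) {T : Finset E}
    (hTS : T ⊆ S) (hT : T.card = h) :
    |horderAvg h p T - horderAvg h (g p) (T.image g)| ≤ 2 * ε := by
  have hgT : ∀ x ∈ T, dist x (g x) ≤ ε := fun x hx => hclose x (hTS hx)
  have hgp : dist p (g p) ≤ ε := hclose p hp
  have hε : 0 ≤ ε := dist_nonneg.trans hgp
  have hsum : |∑ q ∈ T, dist p q - ∑ q ∈ T, dist (g p) (g q)| ≤ h * (2 * ε) :=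
    hT ▸ T.abs_sum_sub_sum_le_card_mul fun q hq =>
      abs_dist_sub_dist_le_of_dist_le hgp (hgT q hq)
  have hpairs : |∑ x ∈ T.offDiag, dist x.1 x.2 - ∑ x ∈ T.offDiag, dist (g x.1) (g x.2)|
      ≤ (h * h - h) * (2 * ε) := by
    have hcard : (T.offDiag.card : ℝ) = h * h - h := by
      rw [Finset.offDiag_card, hT, Nat.cast_sub (Nat.le_mul_self h), Nat.cast_mul]
    rw [← hcard]
    refine T.offDiag.abs_sum_sub_sum_le_card_mul fun x hx => ?_
    obtain ⟨hx₁, hx₂, -⟩ := Finset.mem_offDiag.mp hx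
    exact abs_dist_sub_dist_le_of_dist_le (hgT _ hx₁) (hgT _ hx₂)
  rcases Nat.eq_zero_or_pos h with rfl | hh
  · simp [horderAvg, hε]
  have hc : (0 : ℝ) ≤ 2 / (h * (h + 1)) := by positivity
  rw [horderAvg_sub_horderAvg_image (hg.mono (Finset.coe_subset.mpr hTS)), abs_mul,
    abs_of_nonneg hc]
  calc 2 / (h * (h + 1)) * |_ + _ / 2|
      ≤ 2 / (h * (h + 1)) * (h * (2 * ε) + (h * h - h) * (2 * ε) / 2) := by
        gcongr
        refine (abs_add_le _ _).trans (add_le_add hsum ?_)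
        rw [abs_div, abs_two]
        gcongr
    _ = 2 * ε := by field_simp; ring

theorem Finset.powersetCard_image_of_injOn {α β : Type*} [DecidableEq β] {f : α → β}
    {s : Finset α} (hf : Set.InjOn f s) (n : ℕ) :
    (s.image f).powersetCard n = (s.powersetCard n).image (Finset.image f) := by
  ext U
  simp only [Finset.mem_powersetCard, Finset.mem_image, Finset.subset_image_iff]
  constructor
  · rintro ⟨⟨T, hTs, rfl⟩, hcard⟩
    exact ⟨T, ⟨hTs, by rwa [Finset.card_image_of_injOn (hf.mono hTs)] at hcard⟩, rfl⟩
  · rintro ⟨T, ⟨hTs, hcard⟩, rfl⟩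
    exact ⟨⟨T, hTs, rfl⟩, by rw [Finset.card_image_of_injOn (hf.mono hTs), hcard]⟩

theorem Set.BijOn.finset_image_erase {α β : Type*} [DecidableEq α] [DecidableEq β]
    {f : α → β} {s : Finset α} {t : Finset β} (hf : Set.BijOn f s t) {a : α} (ha : a ∈ s) :
    (s.erase a).image f = t.erase (f a) := by
  rw [← Finset.coe_inj, Finset.coe_image, Finset.coe_erase, Finset.coe_erase]
  exact (hf.sdiff_singleton ha).image_eq

theorem map_horderAvg_powersetCard_erase_of_bijOn {E F : Type*} [PseudoMetricSpace F]
    [DecidableEq E] [DecidableEq F] {g : E → F} {S : Finset E} {Q : Finset F}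
    (hg : Set.BijOn g S Q) {p : E} (hp : p ∈ S) (h : ℕ) :
    ((Q.erase (g p)).powersetCard h).val.map (horderAvg h (g p)) =
      ((S.erase p).powersetCard h).val.map fun T => horderAvg h (g p) (T.image g) := by
  have hinj : Set.InjOn g (S.erase p) :=
    hg.injOn.mono (Finset.coe_subset.mpr (S.erase_subset p))
  have hinjImage : Set.InjOn (Finset.image g) ((S.erase p).powersetCard h) :=
    (Finset.image_injOn_powerset_of_injOn hinj).mono fun T hT =>
      Finset.mem_powerset.mpr (Finset.mem_powersetCard.mp hT).1
  rw [← hg.finset_image_erase hp, Finset.powersetCard_image_of_injOn hinj,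
    Finset.image_val_of_injOn hinjImage, Multiset.map_map]
  rfl

theorem abs_ithAvg_sub_ithAvg_image_le {E : Type*} [PseudoMetricSpace E] {h : ℕ} {ε : ℝ}
    {g : E → E} {S Q : Finset E} (hg : Set.BijOn g S Q)
    (hclose : ∀ p ∈ S, dist p (g p) ≤ ε) {p : E} (hp : p ∈ S) (i : ℕ) :
    |ithAvg h S p i - ithAvg h Q (g p) i| ≤ 2 * ε := by
  have hε : 0 ≤ 2 * ε := by linarith [dist_nonneg.trans (hclose p hp)]
  rw [ithAvg, ithAvg, map_horderAvg_powersetCard_erase_of_bijOn hg hp h]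
  refine Multiset.abs_sort_getD_sub_sort_getD_le hε ?_ _
  refine Multiset.rel_map.mpr (Multiset.rel_refl_of_refl_on fun T hT => ?_)
  obtain ⟨hTS, hTcard⟩ := Finset.mem_powersetCard.mp hT
  exact abs_horderAvg_sub_horderAvg_image_le hg.injOn hclose hp (hTS.trans (S.erase_subset p))
    hTcard

theorem stmt_11_general (n h : ℕ) (ε : ℝ)
    (S Q : Finset (EuclideanSpace ℝ (Fin n)))
    (g : EuclideanSpace ℝ (Fin n) → EuclideanSpace ℝ (Fin n))
    (hg : Set.BijOn g ↑S ↑Q) (hclose : ∀ p ∈ S, dist p (g p) ≤ ε) :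
    (∀ p ∈ S, ∀ T : Finset (EuclideanSpace ℝ (Fin n)),
      T ⊆ S.erase p → T.card = h →
      |horderAvg h p T - horderAvg h (g p) (T.image g)| ≤ 2 * ε) ∧
    (∀ p ∈ S, ∀ i : ℕ, 1 ≤ i → i ≤ (S.card - 1).choose h →
      |ithAvg h S p i - ithAvg h Q (g p) i| ≤ 2 * ε) := by
  exact ⟨fun p hp T hTS hTcard => abs_horderAvg_sub_horderAvg_image_le hg.injOn hclose hp
      (hTS.trans (S.erase_subset p)) hTcard,
    fun p hp i _ _ => abs_ithAvg_sub_ithAvg_image_le hg hclose hp i⟩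

/-- Let `g : S → Q` be a bijection between finite subsets of
`ℝⁿ` moving every point by at most `ε`, and `h ≥ 1` with `|S| ≥ h+1`. Then
`|A(p,T) − A(g(p),g(T))| ≤ 2ε` for every `p ∈ S` and every `h`-element subset
`T` of `S∖{p}`; consequently for `1 ≤ i ≤ C(|S|−1,h)` the `i`-th smallest
h-order averages at `p` (in `S`) and at `g(p)` (in `Q`) differ by at most
`2ε`. -/
theorem stmt_11 (n h : ℕ) (hn : 1 ≤ n) (hh : 1 ≤ h) (ε : ℝ) (hε : 0 ≤ ε)
    (S Q : Finset (EuclideanSpace ℝ (Fin n))) (hcard : h + 1 ≤ S.card)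
    (g : EuclideanSpace ℝ (Fin n) → EuclideanSpace ℝ (Fin n))
    (hg : Set.BijOn g ↑S ↑Q) (hclose : ∀ p ∈ S, dist p (g p) ≤ ε) :
    (∀ p ∈ S, ∀ T : Finset (EuclideanSpace ℝ (Fin n)),
      T ⊆ S.erase p → T.card = h →
      |horderAvg h p T - horderAvg h (g p) (T.image g)| ≤ 2 * ε) ∧
    (∀ p ∈ S, ∀ i : ℕ, 1 ≤ i → i ≤ (S.card - 1).choose h →
      |ithAvg h S p i - ithAvg h Q (g p) i| ≤ 2 * ε) :=
  stmt_11_general n h ε S Q g hg hclose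
end

section
/- Let S, Q ⊂ ℝ be finite sets of equal cardinality, let r(S) be half the minimum distance between distinct points of S, and let g : S → Q be a bijection with |p − g(p)| ≤ ε for every p ∈ S, where 0 ≤ ε < r(S). Then g is strictly increasing, and for every p ∈ S and every i with 1 ≤ i ≤ |{q ∈ S : q > p}|, the i-th smallest rightward distance of p in S and the i-th smallest rightward distance of g(p) in Q differ by at most 2ε. -/
/-!
Since the points of `S` are `2r`-separated and each moves by at most `ε < r`, no two of
them can swap order, so `g` is strictly increasing. Hence `g` maps the points to the right
of `p` onto the points to the right of `g p`, preserving their order, and the `i`-th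
rightward distances are `x - p` and `g x - g p` for the same point `x`; these differ by
at most `|x - g x| + |p - g p| ≤ 2ε`.
-/

/-- The `i`-th smallest rightward distance of a point `p` of a finite set
`S ⊂ ℝ`: the `i`-th entry of the increasing list of the distances `q − p` over
the points `q ∈ S` with `q > p`. -/
noncomputable def ithRight (S : Finset ℝ) (p : ℝ) (i : ℕ) : ℝ :=
  (Multiset.sort
    (((S.filter fun q => p < q).val).map fun q => q - p) (· ≤ ·)).getD (i - 1) 0

lemma strictMonoOn_of_abs_sub_le {S : Set ℝ} {g : ℝ → ℝ} {ε r : ℝ}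
    (hsep : ∀ a ∈ S, ∀ b ∈ S, a ≠ b → 2 * r ≤ |a - b|) (hεr : ε < r)
    (hclose : ∀ p ∈ S, |p - g p| ≤ ε) : StrictMonoOn g S := by
  intro p hp q hq hpq
  have hgap := hsep p hp q hq hpq.ne
  rw [abs_sub_comm, abs_of_pos (sub_pos.2 hpq)] at hgap
  obtain ⟨hgp, -⟩ := abs_le.mp (hclose p hp)
  obtain ⟨-, hgq⟩ := abs_le.mp (hclose q hq)
  linarith

lemma ithRight_image {S : Finset ℝ} {g : ℝ → ℝ} {p : ℝ} (hg : StrictMonoOn g S) (hp : p ∈ S)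
    (i : ℕ) :
    ithRight (S.image g) (g p) i =
      (((S.filter (p < ·)).sort (· ≤ ·)).map fun q => g q - g p).getD (i - 1) 0 := by
  set T := S.filter (p < ·)
  have hTS : (T : Set ℝ) ⊆ S := Finset.coe_subset.2 (Finset.filter_subset _ _)
  have hfilter : (S.image g).filter (g p < ·) = T.image g := by
    rw [Finset.filter_image]
    exact congrArg _ (Finset.filter_congr fun q hq => hg.lt_iff_lt hp hq)
  have hdist : StrictMonoOn (fun q => g q - g p) T :=
    fun a ha b hb hab => sub_lt_sub_right ((hg.mono hTS) ha hb hab) _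
  rw [ithRight, hfilter, Finset.image_val_of_injOn ((hg.mono hTS).injOn), Multiset.map_map,
    Function.comp_def, ← Multiset.map_sort _ _ _ _ fun a ha b hb => (hdist.le_iff_le ha hb).symm]
  rfl

lemma abs_getD_map_sub_le {α : Type*} (l : List α) {f f' : α → ℝ} {δ : ℝ} (hδ : 0 ≤ δ)
    (h : ∀ x ∈ l, |f x - f' x| ≤ δ) (n : ℕ) :
    |(l.map f).getD n 0 - (l.map f').getD n 0| ≤ δ := by
  by_cases hn : n < l.length
  · rw [List.getD_eq_getElem (l.map f) 0 (by simpa using hn),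
      List.getD_eq_getElem (l.map f') 0 (by simpa using hn), List.getElem_map, List.getElem_map]
    exact h _ (l.getElem_mem hn)
  · rw [List.getD_eq_default (l.map f) 0 (by simpa using hn),
      List.getD_eq_default (l.map f') 0 (by simpa using hn), sub_self, abs_zero]
    exact hδ

theorem stmt_13_general (ε r : ℝ) (hε : 0 ≤ ε) (S Q : Finset ℝ)
    (hr1 : ∀ a ∈ S, ∀ b ∈ S, a ≠ b → 2 * r ≤ |a - b|)
    (hεr : ε < r)
    (g : ℝ → ℝ) (hg : Set.BijOn g ↑S ↑Q) (hclose : ∀ p ∈ S, |p - g p| ≤ ε) :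
    (∀ p ∈ S, ∀ q ∈ S, p < q → g p < g q) ∧
    (∀ p ∈ S, ∀ i : ℕ, 1 ≤ i → i ≤ (S.filter fun q => p < q).card →
      |ithRight S p i - ithRight Q (g p) i| ≤ 2 * ε) := by
  have hmono : StrictMonoOn g S := strictMonoOn_of_abs_sub_le hr1 hεr hclose
  have hQ : Q = S.image g := Finset.coe_injective (by rw [Finset.coe_image, hg.image_eq])
  refine ⟨hmono, fun p hp i _ _ => ?_⟩
  have hS := ithRight_image strictMonoOn_id hp i
  simp only [Finset.image_id, id] at hS
  rw [hS, hQ, ithRight_image hmono hp]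
  refine abs_getD_map_sub_le _ (by positivity : (0 : ℝ) ≤ 2 * ε) (fun x hx => ?_) _
  have hxS : x ∈ S := (Finset.mem_filter.1 ((Finset.mem_sort _).1 hx)).1
  calc |x - p - (g x - g p)| = |(x - g x) - (p - g p)| := by congr 1; ring
    _ ≤ |x - g x| + |p - g p| := abs_sub _ _
    _ ≤ 2 * ε := by linarith [hclose x hxS, hclose p hp]

/-- Let `S, Q ⊂ ℝ` be finite sets of equal cardinality, `r` the
packing radius of `S` (half the minimum distance between distinct points of
`S`), and `g : S → Q` a bijection with `|p − g(p)| ≤ ε` for all `p ∈ S`, where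
`0 ≤ ε < r`. Then `g` is strictly increasing, and for every `p ∈ S` and every
`1 ≤ i ≤ |{q ∈ S : q > p}|`, the `i`-th smallest rightward distance of `p` in
`S` and of `g(p)` in `Q` differ by at most `2ε`. -/
theorem stmt_13 (ε r : ℝ) (hε : 0 ≤ ε) (S Q : Finset ℝ)
    (hcard : S.card = Q.card) (h2 : 2 ≤ S.card)
    (hr1 : ∀ a ∈ S, ∀ b ∈ S, a ≠ b → 2 * r ≤ |a - b|)
    (hr2 : ∃ a ∈ S, ∃ b ∈ S, a ≠ b ∧ 2 * r = |a - b|)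
    (hεr : ε < r)
    (g : ℝ → ℝ) (hg : Set.BijOn g ↑S ↑Q) (hclose : ∀ p ∈ S, |p - g p| ≤ ε) :
    (∀ p ∈ S, ∀ q ∈ S, p < q → g p < g q) ∧
    (∀ p ∈ S, ∀ i : ℕ, 1 ≤ i → i ≤ (S.filter fun q => p < q).card →
      |ithRight S p i - ithRight Q (g p) i| ≤ 2 * ε) :=
  stmt_13_general ε r hε S Q hr1 hεr g hg hclose
end

section
/- Let v₁, …, v_n be a basis of ℝⁿ, Λ = {Σᵢ cᵢvᵢ : cᵢ ∈ ℤ} the lattice it spans, U = {Σᵢ tᵢvᵢ : tᵢ ∈ [0,1)} its unit cell, d the diameter of U, M ⊂ U a finite motif of exactly m ≥ 1 points, S = M + Λ, V_n the Lebesgue volume of the unit ball of ℝⁿ, and PPC(S) = (vol(U)/(m·V_n))^{1/n}. Then for every p ∈ S and every r ≥ 0, the intersection of S with the closed Euclidean ball B̄(p,r) is finite and its cardinality satisfies |S ∩ B̄(p,r)| ≤ ((r + d)/PPC(S))ⁿ, equivalently |S ∩ B̄(p,r)|·vol(U) ≤ m·V_n·(r + d)ⁿ. -/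
/-!
A point `a + g` of `S` in `B̄(p, r)`, with `a ∈ M` and `g ∈ Λ`, forces the whole cell `g + U` into
`B̄(p, r + d)`, since `a ∈ U`. Translates of `U` by distinct lattice vectors are disjoint, so at
most `vol B̄(p, r + d) / vol U` lattice vectors arise this way, each from at most `m` points.
-/

open scoped ENNReal Pointwise
open Metric MeasureTheory Module Submodule

theorem ncard_mul_measure_le_of_pairwiseDisjoint_vadd {G : Type*} [MeasurableSpace G] [AddGroup G]
    [MeasurableAdd G] (μ : Measure G) [μ.IsAddLeftInvariant] {A s t : Set G} (hA : A.Finite)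
    (hs : MeasurableSet s) (hdisj : A.PairwiseDisjoint (· +ᵥ s)) (hsub : ∀ g ∈ A, g +ᵥ s ⊆ t) :
    A.ncard * μ s ≤ μ t := by
  calc A.ncard * μ s = ∑ g ∈ hA.toFinset, μ (g +ᵥ s) := by
        simp [measure_vadd, Set.ncard_eq_toFinset_card A hA]
    _ = μ (⋃ g ∈ hA.toFinset, g +ᵥ s) :=
        (measure_biUnion_finset (by simpa using hdisj) fun g _ ↦ hs.const_vadd g).symm
    _ ≤ μ t := measure_mono <| Set.iUnion₂_subset fun g hg ↦ hsub g (by simpa using hg)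

theorem vadd_subset_closedBall_add_diam {E : Type*} [SeminormedAddCommGroup E] {F : Set E}
    (hF : Bornology.IsBounded F) {a g p : E} {r : ℝ} (ha : a ∈ F) (hg : g + a ∈ closedBall p r) :
    g +ᵥ F ⊆ closedBall p (r + diam F) := by
  rintro _ ⟨u, hu, rfl⟩
  rw [mem_closedBall] at hg ⊢
  calc dist (g + u) p ≤ dist (g + u) (g + a) + dist (g + a) p := dist_triangle _ _ _
    _ ≤ diam F + r := by
        rw [dist_add_left]
        exact add_le_add (dist_le_diam_of_mem hF hu ha) hg
    _ = r + diam F := add_comm _ _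

namespace ZSpan

variable {E ι : Type*} [NormedAddCommGroup E] [NormedSpace ℝ E] (b : Basis ι ℝ E)

theorem setOf_exists_int_sum_eq_span [Fintype ι] :
    {x | ∃ c : ι → ℤ, x = ∑ i, (c i : ℝ) • b i} = (span ℤ (Set.range b) : Set E) := by
  ext x
  simp only [Set.mem_ofPred_eq, SetLike.mem_coe, mem_span_range_iff_exists_fun,
    Int.cast_smul_eq_zsmul, eq_comm]

theorem setOf_exists_sum_Ico_eq_fundamentalDomain [Fintype ι] :
    {x | ∃ t : ι → ℝ, (∀ i, t i ∈ Set.Ico (0 : ℝ) 1) ∧ x = ∑ i, t i • b i} =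
      fundamentalDomain b := by
  ext x
  simp only [Set.mem_ofPred_eq, mem_fundamentalDomain]
  constructor
  · rintro ⟨t, ht, rfl⟩ i
    rw [Basis.repr_sum_self]
    exact ht i
  · exact fun h ↦ ⟨_, h, (b.sum_repr x).symm⟩

theorem zero_mem_fundamentalDomain : (0 : E) ∈ fundamentalDomain b := by
  simp [mem_fundamentalDomain]

theorem pairwiseDisjoint_vadd_fundamentalDomain [Finite ι] :
    (span ℤ (Set.range b) : Set E).PairwiseDisjoint (· +ᵥ fundamentalDomain b) := by
  intro g₁ hg₁ g₂ hg₂ hne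
  refine Set.disjoint_left.mpr fun y hy₁ hy₂ ↦ hne ?_
  rw [Set.mem_vadd_set_iff_neg_vadd_mem] at hy₁ hy₂
  obtain ⟨_, _, huniq⟩ := exist_unique_vadd_mem_fundamentalDomain b y
  have h₁ := huniq ⟨-g₁, neg_mem hg₁⟩ hy₁
  have h₂ := huniq ⟨-g₂, neg_mem hg₂⟩ hy₂
  exact neg_injective (congrArg Subtype.val (h₁.trans h₂.symm))

def cellsInClosedBall (p : E) (R : ℝ) : Set E :=
  {g ∈ span ℤ (Set.range b) | g +ᵥ fundamentalDomain b ⊆ closedBall p R}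

variable [Finite ι]

theorem finite_cellsInClosedBall [ProperSpace E] (p : E) (R : ℝ) :
    (cellsInClosedBall b p R).Finite :=
  (setFinite_inter b isBounded_closedBall).subset fun g hg ↦
    ⟨hg.2 ⟨0, zero_mem_fundamentalDomain b, add_zero g⟩, hg.1⟩

theorem ncard_cellsInClosedBall_mul_measure_le [ProperSpace E] [MeasurableSpace E] [BorelSpace E]
    (μ : Measure E) [μ.IsAddLeftInvariant] (p : E) (R : ℝ) :
    (cellsInClosedBall b p R).ncard * μ (fundamentalDomain b) ≤ μ (closedBall p R) :=
  ncard_mul_measure_le_of_pairwiseDisjoint_vadd μ (finite_cellsInClosedBall b p R)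
    (fundamentalDomain_measurableSet b)
    ((pairwiseDisjoint_vadd_fundamentalDomain b).subset fun _ hg ↦ hg.1) fun _ hg ↦ hg.2

theorem add_span_inter_closedBall_subset {M : Set E} (hM : M ⊆ fundamentalDomain b) (p : E)
    (r : ℝ) :
    (M + span ℤ (Set.range b)) ∩ closedBall p r ⊆
      M + cellsInClosedBall b p (r + diam (fundamentalDomain b)) := by
  rintro _ ⟨⟨a, ha, g, hg, rfl⟩, hball⟩
  refine ⟨a, ha, g, ⟨hg, ?_⟩, rfl⟩
  exact vadd_subset_closedBall_add_diam (fundamentalDomain_isBounded b) (hM ha)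
    (by rwa [add_comm])

variable [ProperSpace E]

theorem finite_add_span_inter_closedBall {M : Set E} (hMfin : M.Finite)
    (hM : M ⊆ fundamentalDomain b) (p : E) (r : ℝ) :
    ((M + span ℤ (Set.range b)) ∩ closedBall p r).Finite :=
  (hMfin.add (finite_cellsInClosedBall b _ _)).subset
    (add_span_inter_closedBall_subset b hM p r)

theorem ncard_add_span_inter_closedBall_mul_measure_le [MeasurableSpace E] [BorelSpace E]
    (μ : Measure E) [μ.IsAddLeftInvariant] {M : Finset E} (hM : ↑M ⊆ fundamentalDomain b)
    (p : E) (r : ℝ) :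
    (((M : Set E) + span ℤ (Set.range b)) ∩ closedBall p r).ncard * μ (fundamentalDomain b) ≤
      M.card * μ (closedBall p (r + diam (fundamentalDomain b))) := by
  set C := cellsInClosedBall b p (r + diam (fundamentalDomain b))
  have hcard :
      (((M : Set E) + span ℤ (Set.range b)) ∩ closedBall p r).ncard ≤ M.card * C.ncard :=
    calc _ ≤ (↑M + C).ncard :=
          Set.ncard_le_ncard (add_span_inter_closedBall_subset b hM p r)
            (M.finite_toSet.add (finite_cellsInClosedBall b _ _))
      _ ≤ M.card * C.ncard := by simpa using Set.natCard_add_le (s := (M : Set E)) (t := C)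
  calc _ ≤ ((M.card * C.ncard : ℕ) : ℝ≥0∞) * μ (fundamentalDomain b) := by gcongr
    _ = M.card * (C.ncard * μ (fundamentalDomain b)) := by push_cast; ring
    _ ≤ _ := by gcongr; exact ncard_cellsInClosedBall_mul_measure_le b μ p _

end ZSpan

theorem stmt_14_general (n m : ℕ)
    (v : Module.Basis (Fin n) ℝ (EuclideanSpace ℝ (Fin n)))
    (Λ : Set (EuclideanSpace ℝ (Fin n)))
    (hΛ : Λ = {x | ∃ c : Fin n → ℤ, x = ∑ i, (c i : ℝ) • v i})
    (U : Set (EuclideanSpace ℝ (Fin n)))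
    (hU : U = {x | ∃ t : Fin n → ℝ, (∀ i, t i ∈ Set.Ico (0 : ℝ) 1) ∧
      x = ∑ i, t i • v i})
    (d : ℝ) (hd : d = Metric.diam U)
    (M : Finset (EuclideanSpace ℝ (Fin n))) (hMcard : M.card = m)
    (hMU : ∀ a ∈ M, a ∈ U)
    (S : Set (EuclideanSpace ℝ (Fin n)))
    (hS : S = {x | ∃ a ∈ M, ∃ g ∈ Λ, x = a + g}) :
    ∀ p ∈ S, ∀ r : ℝ, 0 ≤ r →
      (S ∩ Metric.closedBall p r).Finite ∧
      ((S ∩ Metric.closedBall p r).ncard : ℝ≥0∞) * MeasureTheory.volume U ≤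
        (m : ℝ≥0∞) *
          MeasureTheory.volume (Metric.ball (0 : EuclideanSpace ℝ (Fin n)) 1) *
          ENNReal.ofReal ((r + d) ^ n) := by
  intro p _ r hr
  rw [ZSpan.setOf_exists_int_sum_eq_span] at hΛ
  rw [ZSpan.setOf_exists_sum_Ico_eq_fundamentalDomain] at hU
  have hSM : S = (M : Set _) + Λ := by
    ext x
    simp [hS, Set.mem_add, eq_comm]
  subst hΛ hU hd hSM hMcard
  have hMU : (M : Set _) ⊆ ZSpan.fundamentalDomain v := hMU
  refine ⟨ZSpan.finite_add_span_inter_closedBall v M.finite_toSet hMU p r, ?_⟩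
  have hR : 0 ≤ r + diam (ZSpan.fundamentalDomain v) := add_nonneg hr diam_nonneg
  calc _ ≤ M.card * volume (closedBall p (r + diam (ZSpan.fundamentalDomain v))) :=
        ZSpan.ncard_add_span_inter_closedBall_mul_measure_le v volume hMU p r
    _ = _ := by
        rw [Measure.addHaar_closedBall _ _ hR, finrank_euclideanSpace_fin,
          mul_comm (ENNReal.ofReal _), mul_assoc]

/-- Let `Λ` be the lattice spanned by a basis `v₁,…,v_n` of
`ℝⁿ`, `U = {Σ tᵢvᵢ : tᵢ ∈ [0,1)}` its unit cell with diameter `d`, `M ⊂ U` a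
motif of exactly `m ≥ 1` points and `S = M + Λ`. Then for every `p ∈ S` and
`r ≥ 0` the set `S ∩ B̄(p,r)` is finite and
`|S ∩ B̄(p,r)| ≤ ((r+d)/PPC(S))ⁿ`, equivalently
`|S ∩ B̄(p,r)|·vol(U) ≤ m·V_n·(r+d)ⁿ` where `V_n` is the volume of the unit
ball of `ℝⁿ`. -/
theorem stmt_14 (n m : ℕ) (hn : 1 ≤ n) (hm : 1 ≤ m)
    (v : Module.Basis (Fin n) ℝ (EuclideanSpace ℝ (Fin n)))
    (Λ : Set (EuclideanSpace ℝ (Fin n)))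
    (hΛ : Λ = {x | ∃ c : Fin n → ℤ, x = ∑ i, (c i : ℝ) • v i})
    (U : Set (EuclideanSpace ℝ (Fin n)))
    (hU : U = {x | ∃ t : Fin n → ℝ, (∀ i, t i ∈ Set.Ico (0 : ℝ) 1) ∧
      x = ∑ i, t i • v i})
    (d : ℝ) (hd : d = Metric.diam U)
    (M : Finset (EuclideanSpace ℝ (Fin n))) (hMcard : M.card = m)
    (hMU : ∀ a ∈ M, a ∈ U)
    (S : Set (EuclideanSpace ℝ (Fin n)))
    (hS : S = {x | ∃ a ∈ M, ∃ g ∈ Λ, x = a + g}) :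
    ∀ p ∈ S, ∀ r : ℝ, 0 ≤ r →
      (S ∩ Metric.closedBall p r).Finite ∧
      ((S ∩ Metric.closedBall p r).ncard : ℝ≥0∞) * MeasureTheory.volume U ≤
        (m : ℝ≥0∞) *
          MeasureTheory.volume (Metric.ball (0 : EuclideanSpace ℝ (Fin n)) 1) *
          ENNReal.ofReal ((r + d) ^ n) :=
  stmt_14_general n m v Λ hΛ U hU d hd M hMcard hMU S hS
end

section
/- Let v₁, …, v_n be a basis of ℝⁿ, Λ = {Σᵢ cᵢvᵢ : cᵢ ∈ ℤ} the lattice it spans, U = {Σᵢ tᵢvᵢ : tᵢ ∈ [0,1)} its unit cell, d the diameter of U, M ⊂ U a finite motif of exactly m ≥ 1 points, S = M + Λ, V_n the Lebesgue volume of the unit ball of ℝⁿ, and PPC(S) = (vol(U)/(m·V_n))^{1/n}. Then for every p ∈ S and every r ≥ d, the cardinality of the intersection of S with the closed Euclidean ball B̄(p,r) satisfies ((r − d)/PPC(S))ⁿ ≤ |S ∩ B̄(p,r)|, equivalently m·V_n·(r − d)ⁿ ≤ |S ∩ B̄(p,r)|·vol(U). -/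
/-!
The lattice translates of the unit cell `U` that meet the ball `B̄(p, r - d)` cover it, so their
number `N` satisfies `vol B̄(p, r - d) ≤ N · vol U`. Pairing each such lattice vector `g` with each
motif point `a` gives `m · N` distinct points `a - g` of `S` (distinct because `U` contains exactly
one point of each coset of `Λ`), all within distance `d + (r - d) = r` of `p`.
-/

open scoped ENNReal

open MeasureTheory Metric Bornology Submodule Pointwise

namespace ZSpan

variable {E ι : Type*} [NormedAddCommGroup E] [NormedSpace ℝ E] (b : Module.Basis ι ℝ E)

theorem mem_span_iff_exists_int_sum [Fintype ι] {x : E} :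
    x ∈ span ℤ (Set.range b) ↔ ∃ c : ι → ℤ, x = ∑ i, (c i : ℝ) • b i := by
  simp only [mem_span_range_iff_exists_fun, Int.cast_smul_eq_zsmul, eq_comm]

theorem fundamentalDomain_eq_setOf_sum [Fintype ι] :
    fundamentalDomain b =
      {x | ∃ t : ι → ℝ, (∀ i, t i ∈ Set.Ico (0 : ℝ) 1) ∧ x = ∑ i, t i • b i} := by
  ext x
  refine ⟨fun hx ↦ ⟨b.repr x, (mem_fundamentalDomain b).mp hx, (b.sum_repr x).symm⟩, ?_⟩
  rintro ⟨t, ht, rfl⟩ i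
  rw [Module.Basis.repr_sum_self]
  exact ht i

variable {b}

theorem eq_of_mem_fundamentalDomain_of_sub_mem [Fintype ι] {x y : E}
    (hx : x ∈ fundamentalDomain b) (hy : y ∈ fundamentalDomain b)
    (hxy : x - y ∈ span ℤ (Set.range b)) : x = y := by
  rw [← fract_eq_self.mpr hx, ← fract_eq_self.mpr hy, ← sub_add_cancel x y,
    fract_zSpan_add b y hxy]

section Finite

variable [ProperSpace E] [Finite ι]

theorem finite_add_span_inter {M : Set E} (hM : M.Finite) {s : Set E} (hs : IsBounded s) :
    ((M + span ℤ (Set.range b)) ∩ s).Finite := by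
  refine (hM.add (setFinite_inter b (hs.sub hM.isBounded))).subset ?_
  rintro _ ⟨⟨a, ha, g, hg, rfl⟩, hs'⟩
  exact ⟨a, ha, g, ⟨⟨a + g, hs', a, ha, add_sub_cancel_left a g⟩, hg⟩, rfl⟩

theorem measure_le_ncard_mul_measure_fundamentalDomain [MeasurableSpace E] [MeasurableAdd E]
    (μ : Measure E) [μ.IsAddLeftInvariant] {s : Set E} (hs : IsBounded s) :
    μ s ≤ ((fundamentalDomain b - s) ∩ span ℤ (Set.range b)).ncard * μ (fundamentalDomain b) := by
  set G := (fundamentalDomain b - s) ∩ span ℤ (Set.range b)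
  have hG : G.Finite := setFinite_inter b ((fundamentalDomain_isBounded b).sub hs)
  have hcover : s ⊆ ⋃ g ∈ hG.toFinset, (g + ·) ⁻¹' fundamentalDomain b := by
    intro x hx
    obtain ⟨g, hg, -⟩ := exist_unique_vadd_mem_fundamentalDomain b x
    exact Set.mem_iUnion₂.mpr ⟨g, hG.mem_toFinset.mpr
      ⟨⟨g + x, hg, x, hx, add_sub_cancel_right _ _⟩, g.2⟩, hg⟩
  calc μ s ≤ ∑ g ∈ hG.toFinset, μ ((g + ·) ⁻¹' fundamentalDomain b) :=
        (measure_mono hcover).trans (measure_biUnion_finset_le _ _)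
    _ = G.ncard * μ (fundamentalDomain b) := by
        simp only [measure_preimage_add, Finset.sum_const, nsmul_eq_mul,
          Set.ncard_eq_toFinset_card G hG]

end Finite

theorem card_mul_ncard_le_ncard_add_span_inter_closedBall [ProperSpace E] [Fintype ι]
    {M : Finset E} (hM : (M : Set E) ⊆ fundamentalDomain b) (x : E) (ρ : ℝ) :
    M.card * ((fundamentalDomain b - closedBall x ρ) ∩ span ℤ (Set.range b)).ncard ≤
      (((M : Set E) + span ℤ (Set.range b)) ∩
        closedBall x (diam (fundamentalDomain b) + ρ)).ncard := by
  set F := fundamentalDomain b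
  set L : Set E := ↑(span ℤ (Set.range b))
  set G := (F - closedBall x ρ) ∩ L
  have hmaps :
      ∀ q ∈ (M : Set E) ×ˢ G, q.1 - q.2 ∈ ((M : Set E) + L) ∩ closedBall x (diam F + ρ) := by
    rintro ⟨a, _⟩ ⟨ha, ⟨f, hf, y, hy, rfl⟩, hg⟩
    refine ⟨⟨a, ha, -(f - y), neg_mem hg, (sub_eq_add_neg _ _).symm⟩, ?_⟩
    calc dist (a - (f - y)) x ≤ dist (a - (f - y)) y + dist y x := dist_triangle _ _ _
      _ = dist a f + dist y x := by
        congr 1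
        rw [dist_eq_norm, dist_eq_norm]
        congr 1
        abel
      _ ≤ diam F + ρ :=
        add_le_add (dist_le_diam_of_mem (fundamentalDomain_isBounded b) (hM ha) hf) hy
  have hinj : Set.InjOn (fun q : E × E ↦ q.1 - q.2) ((M : Set E) ×ˢ G) := by
    rintro ⟨a, g⟩ ⟨ha, -, hg⟩ ⟨a', g'⟩ ⟨ha', -, hg'⟩ h
    have ha_eq : a = a' := eq_of_mem_fundamentalDomain_of_sub_mem (hM ha) (hM ha')
      (sub_eq_sub_iff_sub_eq_sub.mp h ▸ sub_mem hg hg')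
    subst ha_eq
    exact Prod.ext rfl (sub_right_injective h)
  simpa only [Set.ncard_prod, Set.ncard_coe_finset] using Set.ncard_le_ncard_of_injOn _ hmaps hinj
    (finite_add_span_inter M.finite_toSet isBounded_closedBall)

end ZSpan

theorem stmt_15_general (n m : ℕ)
    (v : Module.Basis (Fin n) ℝ (EuclideanSpace ℝ (Fin n)))
    (Λ : Set (EuclideanSpace ℝ (Fin n)))
    (hΛ : Λ = {x | ∃ c : Fin n → ℤ, x = ∑ i, (c i : ℝ) • v i})
    (U : Set (EuclideanSpace ℝ (Fin n)))
    (hU : U = {x | ∃ t : Fin n → ℝ, (∀ i, t i ∈ Set.Ico (0 : ℝ) 1) ∧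
      x = ∑ i, t i • v i})
    (d : ℝ) (hd : d = Metric.diam U)
    (M : Finset (EuclideanSpace ℝ (Fin n))) (hMcard : M.card = m)
    (hMU : ∀ a ∈ M, a ∈ U)
    (S : Set (EuclideanSpace ℝ (Fin n)))
    (hS : S = {x | ∃ a ∈ M, ∃ g ∈ Λ, x = a + g}) :
    ∀ p ∈ S, ∀ r : ℝ, d ≤ r →
      (m : ℝ≥0∞) *
          MeasureTheory.volume (Metric.ball (0 : EuclideanSpace ℝ (Fin n)) 1) *
          ENNReal.ofReal ((r - d) ^ n) ≤
        ((S ∩ Metric.closedBall p r).ncard : ℝ≥0∞) * MeasureTheory.volume U := by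
  intro p _ r hr
  have hΛ_span : Λ = span ℤ (Set.range v) := by
    ext x
    simp only [hΛ, SetLike.mem_coe, ZSpan.mem_span_iff_exists_int_sum, Set.mem_ofPred_eq]
  have hU_fd : U = ZSpan.fundamentalDomain v :=
    hU.trans (ZSpan.fundamentalDomain_eq_setOf_sum v).symm
  have hS_add : S = (M : Set (EuclideanSpace ℝ (Fin n))) + Λ := by
    ext x
    simp only [hS, Set.mem_add, Finset.mem_coe, Set.mem_ofPred_eq, eq_comm]
  subst hS_add hU_fd hd hMcard hΛ_span
  set F := ZSpan.fundamentalDomain v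
  set ρ := r - diam F
  have hr_eq : r = diam F + ρ := by ring
  calc (M.card : ℝ≥0∞) * volume (ball (0 : EuclideanSpace ℝ (Fin n)) 1) *
        ENNReal.ofReal (ρ ^ n)
      = M.card * volume (closedBall p ρ) := by
        rw [Measure.addHaar_closedBall _ _ (sub_nonneg.mpr hr), finrank_euclideanSpace_fin,
          mul_assoc, mul_comm (volume _)]
    _ ≤ M.card * (((F - closedBall p ρ) ∩ span ℤ (Set.range v)).ncard * volume F) := by
        gcongr
        exact ZSpan.measure_le_ncard_mul_measure_fundamentalDomain volume isBounded_closedBall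
    _ ≤ _ := by
        rw [← mul_assoc, hr_eq]
        gcongr
        exact_mod_cast ZSpan.card_mul_ncard_le_ncard_add_span_inter_closedBall hMU p ρ

/-- Let `Λ` be the lattice spanned by a basis `v₁,…,v_n` of
`ℝⁿ`, `U = {Σ tᵢvᵢ : tᵢ ∈ [0,1)}` its unit cell with diameter `d`, `M ⊂ U` a
motif of exactly `m ≥ 1` points and `S = M + Λ`. Then for every `p ∈ S` and
`r ≥ d` we have `((r−d)/PPC(S))ⁿ ≤ |S ∩ B̄(p,r)|`, equivalently
`m·V_n·(r−d)ⁿ ≤ |S ∩ B̄(p,r)|·vol(U)` where `V_n` is the volume of the unit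
ball of `ℝⁿ`. -/
theorem stmt_15 (n m : ℕ) (hn : 1 ≤ n) (hm : 1 ≤ m)
    (v : Module.Basis (Fin n) ℝ (EuclideanSpace ℝ (Fin n)))
    (Λ : Set (EuclideanSpace ℝ (Fin n)))
    (hΛ : Λ = {x | ∃ c : Fin n → ℤ, x = ∑ i, (c i : ℝ) • v i})
    (U : Set (EuclideanSpace ℝ (Fin n)))
    (hU : U = {x | ∃ t : Fin n → ℝ, (∀ i, t i ∈ Set.Ico (0 : ℝ) 1) ∧
      x = ∑ i, t i • v i})
    (d : ℝ) (hd : d = Metric.diam U)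
    (M : Finset (EuclideanSpace ℝ (Fin n))) (hMcard : M.card = m)
    (hMU : ∀ a ∈ M, a ∈ U)
    (S : Set (EuclideanSpace ℝ (Fin n)))
    (hS : S = {x | ∃ a ∈ M, ∃ g ∈ Λ, x = a + g}) :
    ∀ p ∈ S, ∀ r : ℝ, d ≤ r →
      (m : ℝ≥0∞) *
          MeasureTheory.volume (Metric.ball (0 : EuclideanSpace ℝ (Fin n)) 1) *
          ENNReal.ofReal ((r - d) ^ n) ≤
        ((S ∩ Metric.closedBall p r).ncard : ℝ≥0∞) * MeasureTheory.volume U :=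
  stmt_15_general n m v Λ hΛ U hU d hd M hMcard hMU S hS
end

section
/- Let v₁, …, v_n be a basis of ℝⁿ, Λ the lattice it spans, U its unit cell, M ⊂ U a finite motif of exactly m ≥ 1 points, S = M + Λ, and PPC(S) = (vol(U)/(m·V_n))^{1/n} where V_n is the volume of the unit ball of ℝⁿ. For p ∈ S and k ≥ 1, let d_k(p) be the k-th smallest element of the multiset {|q − p| : q ∈ S, q ≠ p} of distances from p to the other points of S. Then for every p ∈ S, d_k(p)/k^{1/n} → PPC(S) as k → ∞. -/
/-!
The translates `g + U`, `g ∈ Λ`, tile the space, and every point of `U` has norm at most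
`D = ∑ ‖vᵢ‖`. Hence the lattice points in a closed ball of radius `r` about any centre number
`vol(B_r) / vol(U)` up to replacing `r` by `r ± D`. Summing over the motif, the counting function
`N(r) = #(S ∩ B̄(p, r))` satisfies `(r - D)ⁿ ≤ N(r) · c ≤ (r + D)ⁿ` with `c = vol(U) / (m Vₙ)`,
so `c^(1/n) = PPC(S)`. Since `N(d_k) ≥ k` while `N(s) ≤ k` for `s < d_k`, the distance `d_k`
lies within `D` of `(c k)^(1/n)`, and dividing by `k^(1/n)` gives the limit.
-/

open MeasureTheory Metric Set Filter Topology Module Submodule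
open scoped Pointwise

namespace ZSpan

variable {E ι : Type*} [NormedAddCommGroup E] [NormedSpace ℝ E] [Fintype ι] (b : Basis ι ℝ E)

theorem setOf_sum_intCast_smul_eq_span :
    {x | ∃ c : ι → ℤ, x = ∑ i, (c i : ℝ) • b i} = (span ℤ (range b) : Set E) := by
  ext x
  simp only [mem_ofPred_eq, SetLike.mem_coe, mem_span_range_iff_exists_fun,
    Int.cast_smul_eq_zsmul, eq_comm]

theorem setOf_sum_smul_Ico_eq_fundamentalDomain :
    {x | ∃ t : ι → ℝ, (∀ i, t i ∈ Ico (0 : ℝ) 1) ∧ x = ∑ i, t i • b i} = fundamentalDomain b := by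
  ext x
  rw [mem_fundamentalDomain]
  constructor
  · rintro ⟨t, ht, rfl⟩ i
    simpa only [b.repr_sum_self] using ht i
  · exact fun h => ⟨b.repr x, h, (b.sum_repr x).symm⟩

theorem norm_le_of_mem_fundamentalDomain {u : E} (hu : u ∈ fundamentalDomain b) :
    ‖u‖ ≤ ∑ i, ‖b i‖ :=
  fract_eq_self.mpr hu ▸ norm_fract_le b u

theorem eq_and_eq_of_add_eq_add {g₁ g₂ u₁ u₂ : E} (hg₁ : g₁ ∈ span ℤ (range b))
    (hg₂ : g₂ ∈ span ℤ (range b)) (hu₁ : u₁ ∈ fundamentalDomain b)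
    (hu₂ : u₂ ∈ fundamentalDomain b) (h : g₁ + u₁ = g₂ + u₂) : g₁ = g₂ ∧ u₁ = u₂ := by
  have hu : u₁ = u₂ := by
    rw [← fract_eq_self.mpr hu₁, ← fract_zSpan_add b u₁ hg₁, h, fract_zSpan_add b u₂ hg₂,
      fract_eq_self.mpr hu₂]
  exact ⟨add_right_cancel (hu ▸ h), hu⟩

section LatticeCount

variable [MeasurableSpace E] [BorelSpace E] (μ : Measure E) [μ.IsAddLeftInvariant]

theorem measure_biUnion_vadd_fundamentalDomain {T : Finset E}
    (hT : (T : Set E) ⊆ span ℤ (range b)) :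
    μ (⋃ g ∈ T, g +ᵥ fundamentalDomain b) = T.card * μ (fundamentalDomain b) := by
  have hdisj : (T : Set E).PairwiseDisjoint (· +ᵥ fundamentalDomain b) := by
    intro g₁ hg₁ g₂ hg₂ hne
    refine disjoint_left.mpr ?_
    rintro _ ⟨u₁, hu₁, rfl⟩ ⟨u₂, hu₂, h⟩
    exact hne (eq_and_eq_of_add_eq_add b (hT hg₂) (hT hg₁) hu₂ hu₁ h).1.symm
  rw [measure_biUnion_finset hdisj fun g _ => (fundamentalDomain_measurableSet b).const_vadd g]
  simp [measure_vadd]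

variable [ProperSpace E]

theorem measure_closedBall_sub_le_ncard_mul (c : E) (r : ℝ) :
    μ (closedBall c (r - ∑ i, ‖b i‖)) ≤
      (closedBall c r ∩ span ℤ (range b)).ncard * μ (fundamentalDomain b) := by
  have hfin := setFinite_inter b (isBounded_closedBall (x := c) (r := r))
  rw [ncard_eq_toFinset_card _ hfin,
    ← measure_biUnion_vadd_fundamentalDomain b μ (by simp [inter_subset_right])]
  refine measure_mono fun x hx => ?_
  simp only [mem_iUnion, Finite.mem_toFinset]
  refine ⟨floor b x, ⟨?_, (floor b x).2⟩, fract b x, fract_mem_fundamentalDomain b x, ?_⟩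
  · have hfract := norm_le_of_mem_fundamentalDomain b (fract_mem_fundamentalDomain b x)
    have hdist : dist (floor b x : E) c ≤ dist x c + ‖fract b x‖ := by
      have hfloor : (floor b x : E) = x - fract b x := by rw [fract_apply, sub_sub_cancel]
      rw [hfloor, dist_eq_norm, dist_eq_norm, sub_right_comm]
      exact norm_sub_le _ _
    rw [mem_closedBall] at hx ⊢
    linarith
  · change (floor b x : E) + fract b x = x
    rw [fract_apply, add_sub_cancel]

theorem ncard_mul_le_measure_closedBall_add (c : E) (r : ℝ) :
    (closedBall c r ∩ span ℤ (range b)).ncard * μ (fundamentalDomain b) ≤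
      μ (closedBall c (r + ∑ i, ‖b i‖)) := by
  have hfin := setFinite_inter b (isBounded_closedBall (x := c) (r := r))
  rw [ncard_eq_toFinset_card _ hfin,
    ← measure_biUnion_vadd_fundamentalDomain b μ (by simp [inter_subset_right])]
  refine measure_mono (iUnion₂_subset fun g hg => ?_)
  rintro _ ⟨u, hu, rfl⟩
  rw [Finite.mem_toFinset] at hg
  change dist (g + u) c ≤ r + ∑ i, ‖b i‖
  calc dist (g + u) c ≤ dist (g + u) g + dist g c := dist_triangle _ _ _
    _ ≤ ∑ i, ‖b i‖ + r := by
      rw [dist_self_add_left]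
      exact add_le_add (norm_le_of_mem_fundamentalDomain b hu) (mem_closedBall.mp hg.1)
    _ = r + ∑ i, ‖b i‖ := add_comm _ _

end LatticeCount

end ZSpan

section PeriodicSet

variable {E ι : Type*} [NormedAddCommGroup E] [NormedSpace ℝ E] (b : Basis ι ℝ E) (M : Finset E)

def periodicSet : Set E := {x | ∃ a ∈ M, ∃ g ∈ span ℤ (range b), x = a + g}

theorem closedBall_inter_periodicSet (p : E) (r : ℝ) :
    closedBall p r ∩ periodicSet b M =
      ⋃ a ∈ (M : Set E), (a + ·) '' (closedBall (p - a) r ∩ span ℤ (range b)) := by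
  have hdist : ∀ a g : E, dist (a + g) p = dist g (p - a) := fun a g => by
    rw [dist_eq_norm, dist_eq_norm, sub_sub_eq_add_sub, add_comm g a]
  ext x
  simp only [periodicSet, mem_inter_iff, mem_ofPred_eq, mem_iUnion, mem_image,
    exists_prop, mem_closedBall, SetLike.mem_coe]
  constructor
  · rintro ⟨hx, a, ha, g, hg, rfl⟩
    exact ⟨a, ha, g, ⟨hdist a g ▸ hx, hg⟩, rfl⟩
  · rintro ⟨a, ha, g, ⟨hgd, hg⟩, rfl⟩
    exact ⟨hdist a g ▸ hgd, a, ha, g, hg, rfl⟩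

variable [Fintype ι] [ProperSpace E]

theorem finite_closedBall_inter_periodicSet (p : E) (r : ℝ) :
    (closedBall p r ∩ periodicSet b M).Finite := by
  rw [closedBall_inter_periodicSet]
  exact M.finite_toSet.biUnion fun a _ => (ZSpan.setFinite_inter b isBounded_closedBall).image _

theorem ncard_closedBall_inter_periodicSet (hM : ∀ a ∈ M, a ∈ ZSpan.fundamentalDomain b)
    (p : E) (r : ℝ) :
    (closedBall p r ∩ periodicSet b M).ncard =
      ∑ a ∈ M, (closedBall (p - a) r ∩ span ℤ (range b)).ncard := by
  rw [closedBall_inter_periodicSet, M.finite_toSet.ncard_biUnion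
    (fun a _ => (ZSpan.setFinite_inter b isBounded_closedBall).image _), finsum_mem_coe_finset]
  · simp_rw [ncard_image_of_injective _ (add_right_injective _)]
  · intro a₁ ha₁ a₂ ha₂ hne
    refine disjoint_left.mpr ?_
    rintro _ ⟨g₁, ⟨-, hg₁⟩, rfl⟩ ⟨g₂, ⟨-, hg₂⟩, h⟩
    refine hne (ZSpan.eq_and_eq_of_add_eq_add b hg₂ hg₁ (hM a₂ ha₂) (hM a₁ ha₁) ?_).2.symm
    rw [add_comm g₂, add_comm g₁]
    exact h

variable [MeasurableSpace E] [BorelSpace E] (μ : Measure E) [μ.IsAddHaarMeasure]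

theorem ncard_closedBall_inter_periodicSet_mul_le (hM : ∀ a ∈ M, a ∈ ZSpan.fundamentalDomain b)
    (p : E) (r : ℝ) :
    (closedBall p r ∩ periodicSet b M).ncard * μ (ZSpan.fundamentalDomain b) ≤
      M.card * μ (closedBall 0 (r + ∑ i, ‖b i‖)) := by
  rw [ncard_closedBall_inter_periodicSet b M hM, Nat.cast_sum, Finset.sum_mul, ← nsmul_eq_mul,
    ← Finset.sum_const]
  refine Finset.sum_le_sum fun a _ => ?_
  rw [← Measure.addHaar_closedBall_center μ (p - a)]
  exact ZSpan.ncard_mul_le_measure_closedBall_add b μ (p - a) r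

theorem mul_measure_closedBall_le_ncard_closedBall_inter_periodicSet
    (hM : ∀ a ∈ M, a ∈ ZSpan.fundamentalDomain b) (p : E) (r : ℝ) :
    M.card * μ (closedBall 0 (r - ∑ i, ‖b i‖)) ≤
      (closedBall p r ∩ periodicSet b M).ncard * μ (ZSpan.fundamentalDomain b) := by
  rw [ncard_closedBall_inter_periodicSet b M hM, Nat.cast_sum, Finset.sum_mul, ← nsmul_eq_mul,
    ← Finset.sum_const]
  refine Finset.sum_le_sum fun a _ => ?_
  rw [← Measure.addHaar_closedBall_center μ (p - a)]
  exact ZSpan.measure_closedBall_sub_le_ncard_mul b μ (p - a) r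

theorem ncard_closedBall_inter_periodicSet_mul_le_pow [FiniteDimensional ℝ E]
    (hM : ∀ a ∈ M, a ∈ ZSpan.fundamentalDomain b) (p : E) {r : ℝ} (hr : 0 ≤ r + ∑ i, ‖b i‖) :
    (closedBall p r ∩ periodicSet b M).ncard *
        (μ.real (ZSpan.fundamentalDomain b) / (M.card * μ.real (ball (0 : E) 1))) ≤
      (r + ∑ i, ‖b i‖) ^ finrank ℝ E := by
  have h := ENNReal.toReal_mono (ENNReal.mul_ne_top (ENNReal.natCast_ne_top _)
    measure_closedBall_lt_top.ne) (ncard_closedBall_inter_periodicSet_mul_le b M μ hM p r)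
  rw [ENNReal.toReal_mul, ENNReal.toReal_mul, ENNReal.toReal_natCast, ENNReal.toReal_natCast,
    ← measureReal_def, ← measureReal_def, Measure.addHaar_real_closedBall μ _ hr] at h
  rw [← mul_div_assoc]
  exact div_le_of_le_mul₀ (by positivity) (by positivity) (by linarith)

theorem pow_le_ncard_closedBall_inter_periodicSet_mul [FiniteDimensional ℝ E]
    (hM : ∀ a ∈ M, a ∈ ZSpan.fundamentalDomain b) (hM₀ : M.Nonempty) (p : E) {r : ℝ}
    (hr : ∑ i, ‖b i‖ ≤ r) :
    (r - ∑ i, ‖b i‖) ^ finrank ℝ E ≤ (closedBall p r ∩ periodicSet b M).ncard *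
        (μ.real (ZSpan.fundamentalDomain b) / (M.card * μ.real (ball (0 : E) 1))) := by
  have h := ENNReal.toReal_mono (ENNReal.mul_ne_top (ENNReal.natCast_ne_top _)
    (ZSpan.fundamentalDomain_isBounded b).measure_lt_top.ne)
    (mul_measure_closedBall_le_ncard_closedBall_inter_periodicSet b M μ hM p r)
  rw [ENNReal.toReal_mul, ENNReal.toReal_mul, ENNReal.toReal_natCast, ENNReal.toReal_natCast,
    ← measureReal_def, ← measureReal_def, Measure.addHaar_real_closedBall μ _ (by linarith)] at h
  have hball : 0 < μ.real (ball (0 : E) 1) :=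
    ENNReal.toReal_pos (measure_ball_pos μ 0 one_pos).ne' measure_ball_lt_top.ne
  have hcard : (0 : ℝ) < M.card := by exact_mod_cast hM₀.card_pos
  rw [← mul_div_assoc, le_div_iff₀ (by positivity)]
  linarith

end PeriodicSet

theorem abs_sub_rpow_inv_le_of_ncard_bounds {n : ℕ} (hn : n ≠ 0) {N : ℝ → ℕ} {c C d : ℝ} {k : ℕ}
    (hc : 0 ≤ c) (hC : 0 ≤ C) (hup : ∀ r, 0 ≤ r → N r * c ≤ (r + C) ^ n)
    (hlo : ∀ r, C ≤ r → (r - C) ^ n ≤ N r * c)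
    (hd : 0 ≤ d) (hkd : k ≤ N d) (hlt : ∀ s < d, N s ≤ k) :
    |d - (c * k) ^ (n⁻¹ : ℝ)| ≤ C := by
  have hn' : (0 : ℝ) < n := by positivity
  have hroot_nonneg : 0 ≤ (c * k) ^ (n⁻¹ : ℝ) := by positivity
  have hCd : 0 ≤ d + C := by linarith
  rw [abs_le]
  constructor
  · have hpow : c * k ≤ (d + C) ^ (n : ℝ) := by
      rw [Real.rpow_natCast, mul_comm]
      exact (mul_le_mul_of_nonneg_right (by exact_mod_cast hkd) hc).trans (hup d hd)
    have := (Real.rpow_inv_le_iff_of_pos (by positivity) hCd hn').2 hpow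
    linarith
  · suffices d ≤ (c * k) ^ (n⁻¹ : ℝ) + C by linarith
    refine le_of_forall_lt_imp_le_of_dense fun s hs => ?_
    rcases le_or_gt s C with hsC | hsC
    · linarith
    · have hpow : (s - C) ^ (n : ℝ) ≤ c * k := by
        rw [Real.rpow_natCast, mul_comm c]
        exact (hlo s hsC.le).trans (mul_le_mul_of_nonneg_right (by exact_mod_cast hlt s hs) hc)
      have := (Real.le_rpow_inv_iff_of_pos (by linarith) (by positivity) hn').2 hpow
      linarith

theorem tendsto_div_of_abs_sub_mul_le {α : Type*} {l : Filter α} {f d : α → ℝ} {a C : ℝ}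
    (hf : Tendsto f l atTop) (h : ∀ᶠ x in l, |d x - a * f x| ≤ C) :
    Tendsto (fun x => d x / f x) l (𝓝 a) := by
  rw [tendsto_iff_norm_sub_tendsto_zero]
  refine squeeze_zero' (.of_forall fun _ => norm_nonneg _) ?_
    ((tendsto_const_nhds (x := C)).div_atTop hf)
  filter_upwards [h, hf.eventually_gt_atTop 0] with x hx hfx
  calc ‖d x / f x - a‖ = |d x - a * f x| / f x := by
        rw [Real.norm_eq_abs, div_sub' hfx.ne', abs_div, abs_of_pos hfx, mul_comm]
    _ ≤ C / f x := div_le_div_of_nonneg_right hx hfx.le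

section OrderStatistic

variable {X : Type*} [PseudoMetricSpace X] {S : Set X} {p : X} {d : ℝ} {k : ℕ}

theorem le_ncard_closedBall_inter (hfin : (closedBall p d ∩ S).Finite)
    (hk : k ≤ {q | q ∈ S ∧ q ≠ p ∧ dist q p ≤ d}.ncard) : k ≤ (closedBall p d ∩ S).ncard :=
  hk.trans (ncard_le_ncard (fun _ hq => ⟨mem_closedBall.2 hq.2.2, hq.1⟩) hfin)

theorem ncard_closedBall_inter_le (hfin : {q | q ∈ S ∧ q ≠ p ∧ dist q p < d}.Finite)
    (hk : {q | q ∈ S ∧ q ≠ p ∧ dist q p < d}.ncard ≤ k - 1) (hk₁ : 1 ≤ k) {s : ℝ} (hs : s < d) :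
    (closedBall p s ∩ S).ncard ≤ k := by
  have hsub : closedBall p s ∩ S ⊆ insert p {q | q ∈ S ∧ q ≠ p ∧ dist q p < d} := by
    rintro q ⟨hq, hqS⟩
    by_cases hqp : q = p
    · exact .inl hqp
    · exact .inr ⟨hqS, hqp, (mem_closedBall.1 hq).trans_lt hs⟩
  calc (closedBall p s ∩ S).ncard ≤ (insert p {q | q ∈ S ∧ q ≠ p ∧ dist q p < d}).ncard :=
        ncard_le_ncard hsub (hfin.insert p)
    _ ≤ {q | q ∈ S ∧ q ≠ p ∧ dist q p < d}.ncard + 1 := ncard_insert_le _ _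
    _ ≤ k := by omega

end OrderStatistic

theorem stmt_17_general (n m : ℕ) (hn : 1 ≤ n) (hm : 1 ≤ m)
    (v : Module.Basis (Fin n) ℝ (EuclideanSpace ℝ (Fin n)))
    (Λ : Set (EuclideanSpace ℝ (Fin n)))
    (hΛ : Λ = {x | ∃ c : Fin n → ℤ, x = ∑ i, (c i : ℝ) • v i})
    (U : Set (EuclideanSpace ℝ (Fin n)))
    (hU : U = {x | ∃ t : Fin n → ℝ, (∀ i, t i ∈ Set.Ico (0 : ℝ) 1) ∧
      x = ∑ i, t i • v i})
    (M : Finset (EuclideanSpace ℝ (Fin n))) (hMcard : M.card = m)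
    (hMU : ∀ a ∈ M, a ∈ U)
    (S : Set (EuclideanSpace ℝ (Fin n)))
    (hS : S = {x | ∃ a ∈ M, ∃ g ∈ Λ, x = a + g})
    (PPC : ℝ)
    (hPPC : PPC = ((MeasureTheory.volume U).toReal /
      ((m : ℝ) * (MeasureTheory.volume
        (Metric.ball (0 : EuclideanSpace ℝ (Fin n)) 1)).toReal)) ^ ((1 : ℝ) / n))
    (p : EuclideanSpace ℝ (Fin n))
    (dk : ℕ → ℝ)
    (hdk : ∀ k : ℕ, 1 ≤ k →
      (∃ q ∈ S, q ≠ p ∧ dist q p = dk k) ∧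
      {q | q ∈ S ∧ q ≠ p ∧ dist q p < dk k}.Finite ∧
      {q | q ∈ S ∧ q ≠ p ∧ dist q p < dk k}.ncard ≤ k - 1 ∧
      {q | q ∈ S ∧ q ≠ p ∧ dist q p ≤ dk k}.Finite ∧
      k ≤ {q | q ∈ S ∧ q ≠ p ∧ dist q p ≤ dk k}.ncard) :
    Filter.Tendsto (fun k : ℕ => dk k / (k : ℝ) ^ ((1 : ℝ) / n))
      Filter.atTop (nhds PPC) := by
  rw [ZSpan.setOf_sum_intCast_smul_eq_span] at hΛ
  rw [ZSpan.setOf_sum_smul_Ico_eq_fundamentalDomain] at hU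
  subst hΛ hU hMcard hPPC
  obtain rfl : S = periodicSet v M := hS
  simp only [one_div, ← measureReal_def]
  have hn₀ : n ≠ 0 := by omega
  have hM₀ : M.Nonempty := Finset.card_pos.mp hm
  set c := volume.real (ZSpan.fundamentalDomain v) /
    (M.card * volume.real (ball (0 : EuclideanSpace ℝ (Fin n)) 1))
  have hc : 0 ≤ c := by positivity
  have hD : 0 ≤ ∑ i, ‖v i‖ := Finset.sum_nonneg fun i _ => norm_nonneg _
  have hbound : ∀ k, 1 ≤ k → |dk k - (c * k) ^ (n⁻¹ : ℝ)| ≤ ∑ i, ‖v i‖ := fun k hk => by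
    obtain ⟨⟨q, -, -, hq⟩, hltfin, hlt, -, hle⟩ := hdk k hk
    have hd : 0 ≤ dk k := hq ▸ dist_nonneg
    have hkd := le_ncard_closedBall_inter (finite_closedBall_inter_periodicSet v M p _) hle
    refine abs_sub_rpow_inv_le_of_ncard_bounds
      (N := fun r => (closedBall p r ∩ periodicSet v M).ncard) hn₀ hc hD (fun r hr => ?_) (fun r hr => ?_) hd hkd
      (fun s hs => ncard_closedBall_inter_le hltfin hlt hk hs)
    · simpa only [finrank_euclideanSpace_fin] using
        ncard_closedBall_inter_periodicSet_mul_le_pow v M volume hMU p (add_nonneg hr hD)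
    · simpa only [finrank_euclideanSpace_fin] using
        pow_le_ncard_closedBall_inter_periodicSet_mul v M volume hMU hM₀ p hr
  refine tendsto_div_of_abs_sub_mul_le (C := ∑ i, ‖v i‖)
    ((tendsto_rpow_atTop (by positivity)).comp tendsto_natCast_atTop_atTop) ?_
  filter_upwards [eventually_ge_atTop 1] with k hk
  rw [← Real.mul_rpow hc k.cast_nonneg]
  exact hbound k hk

/-- Let `Λ` be the lattice spanned by a basis `v₁,…,v_n` of
`ℝⁿ`, `U` its unit cell, `M ⊂ U` a motif of exactly `m ≥ 1` points,
`S = M + Λ`, and `PPC(S) = (vol(U)/(m·V_n))^(1/n)`. For `p ∈ S` let `d_k(p)`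
be the `k`-th smallest element (with multiplicity) of the distances from `p`
to the other points of `S` (characterized by: `d_k(p)` is such a distance, at
most `k−1` points `q ≠ p` of `S` have `dist q p < d_k(p)` and at least `k`
have `dist q p ≤ d_k(p)`). Then `d_k(p)/k^(1/n) → PPC(S)` as `k → ∞`. -/
theorem stmt_17 (n m : ℕ) (hn : 1 ≤ n) (hm : 1 ≤ m)
    (v : Module.Basis (Fin n) ℝ (EuclideanSpace ℝ (Fin n)))
    (Λ : Set (EuclideanSpace ℝ (Fin n)))
    (hΛ : Λ = {x | ∃ c : Fin n → ℤ, x = ∑ i, (c i : ℝ) • v i})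
    (U : Set (EuclideanSpace ℝ (Fin n)))
    (hU : U = {x | ∃ t : Fin n → ℝ, (∀ i, t i ∈ Set.Ico (0 : ℝ) 1) ∧
      x = ∑ i, t i • v i})
    (M : Finset (EuclideanSpace ℝ (Fin n))) (hMcard : M.card = m)
    (hMU : ∀ a ∈ M, a ∈ U)
    (S : Set (EuclideanSpace ℝ (Fin n)))
    (hS : S = {x | ∃ a ∈ M, ∃ g ∈ Λ, x = a + g})
    (PPC : ℝ)
    (hPPC : PPC = ((MeasureTheory.volume U).toReal /
      ((m : ℝ) * (MeasureTheory.volume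
        (Metric.ball (0 : EuclideanSpace ℝ (Fin n)) 1)).toReal)) ^ ((1 : ℝ) / n))
    (p : EuclideanSpace ℝ (Fin n)) (hp : p ∈ S)
    (dk : ℕ → ℝ)
    (hdk : ∀ k : ℕ, 1 ≤ k →
      (∃ q ∈ S, q ≠ p ∧ dist q p = dk k) ∧
      {q | q ∈ S ∧ q ≠ p ∧ dist q p < dk k}.Finite ∧
      {q | q ∈ S ∧ q ≠ p ∧ dist q p < dk k}.ncard ≤ k - 1 ∧
      {q | q ∈ S ∧ q ≠ p ∧ dist q p ≤ dk k}.Finite ∧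
      k ≤ {q | q ∈ S ∧ q ≠ p ∧ dist q p ≤ dk k}.ncard) :
    Filter.Tendsto (fun k : ℕ => dk k / (k : ℝ) ^ ((1 : ℝ) / n))
      Filter.atTop (nhds PPC) :=
  stmt_17_general n m hn hm v Λ hΛ U hU M hMcard hMU S hS PPC hPPC p dk hdk
end
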